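/- arXiv:1208.4422 — 5 statements merged into one kernel-verified Lean document; each statement's English description precedes it below -/
import Mathlib

section
/- Under the N=1 dressing, the functions u, v, q, r satisfy equation (E0) of the mixed-type KP system with one self-consistent source, i.e. 4u_t − 3v_{yy} − 12u u_x − u_{xxx} − 3α(qr)_y + 4β(qr)_x + 3α(q r_{xx} − q_{xx} r) = 0 holds identically on ℝ³. -/
/-- Functions of the three variables (x, y, t). -/
abbrev F3 := ℝ → ℝ → ℝ → ℝ

/-- Smoothness (C^∞) of a function of (x,y,t). -/
def Smooth3 (f : F3) : Prop :=
  ContDiff ℝ (⊤ : ℕ∞) (fun p : ℝ × ℝ × ℝ => f p.1 p.2.1 p.2.2)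

/-- Partial derivative in x. -/
noncomputable def px (f : F3) : F3 := fun x y t => deriv (fun x' => f x' y t) x

/-- Partial derivative in y. -/
noncomputable def py (f : F3) : F3 := fun x y t => deriv (fun y' => f x y' t) y

/-- Partial derivative in t. -/
noncomputable def pt (f : F3) : F3 := fun x y t => deriv (fun t' => f x y t') t

/-- The linear flows: w_y = w_xx and w_t = w_xxx. -/
def LinFlow (w : F3) : Prop :=
  (∀ x y t, py w x y t = px (px w) x y t) ∧
  (∀ x y t, pt w x y t = px (px (px w)) x y t)

/-- Equation (E0) of the mixed-type KP system with one self-consistent source. -/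
def E0₁ (α β : ℝ) (u v q r : F3) : Prop :=
  ∀ x y t : ℝ,
    4 * pt u x y t - 3 * py (py v) x y t - 12 * u x y t * px u x y t
      - px (px (px u)) x y t
      - 3 * α * py (fun x y t => q x y t * r x y t) x y t
      + 4 * β * px (fun x y t => q x y t * r x y t) x y t
      + 3 * α * (q x y t * px (px r) x y t - px (px q) x y t * r x y t) = 0

/-- Equation (Eq₁) of the mixed-type KP system with one self-consistent source. -/
def Eq₁ (α β : ℝ) (u v q r : F3) : Prop :=
  ∀ x y t : ℝ,
    α * (pt q x y t - px (px (px q)) x y t - 3 * u x y t * px q x y t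
        - (3/2) * q x y t * py v x y t - (3/2) * q x y t * px u x y t
        - (3/2) * q x y t * (q x y t * r x y t))
    - β * (py q x y t - px (px q) x y t - 2 * u x y t * q x y t) = 0

/-- Equation (Er₁) of the mixed-type KP system with one self-consistent source. -/
def Er₁ (α β : ℝ) (u v q r : F3) : Prop :=
  ∀ x y t : ℝ,
    α * (pt r x y t - px (px (px r)) x y t - 3 * u x y t * px r x y t
        + (3/2) * r x y t * py v x y t - (3/2) * r x y t * px u x y t
        + (3/2) * r x y t * (q x y t * r x y t))
    - β * (py r x y t + px (px r) x y t + 2 * u x y t * r x y t) = 0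

namespace KPaux

/-- ∞-smoothness of the uncurried function. -/
def Sm (f : F3) : Prop :=
  ContDiff ℝ (⊤ : ℕ∞) (fun p : ℝ × ℝ × ℝ => f p.1 p.2.1 p.2.2)

lemma Smooth3.sm {f : F3} (hf : Smooth3 f) : Sm f := hf.of_le (by simp)

lemma Sm.diff {f : F3} (hf : Sm f) :
    Differentiable ℝ (fun p : ℝ × ℝ × ℝ => f p.1 p.2.1 p.2.2) :=
  hf.differentiable (by simp)

lemma sliceX_diff {f : F3} (hf : Sm f) (x y t : ℝ) :
    DifferentiableAt ℝ (fun x' => f x' y t) x := by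
  have : (fun x' : ℝ => f x' y t)
      = (fun p : ℝ × ℝ × ℝ => f p.1 p.2.1 p.2.2) ∘ (fun x' : ℝ => (x', y, t)) := rfl
  rw [this]
  exact (hf.diff.comp (Differentiable.prodMk (differentiable_fun_id) (differentiable_const _))).differentiableAt

lemma sliceY_diff {f : F3} (hf : Sm f) (x y t : ℝ) :
    DifferentiableAt ℝ (fun y' => f x y' t) y := by
  have : (fun y' : ℝ => f x y' t)
      = (fun p : ℝ × ℝ × ℝ => f p.1 p.2.1 p.2.2) ∘ (fun y' : ℝ => (x, y', t)) := rfl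
  rw [this]
  exact (hf.diff.comp (Differentiable.prodMk (differentiable_const _)
    (Differentiable.prodMk (differentiable_fun_id) (differentiable_const _)))).differentiableAt

lemma sliceT_diff {f : F3} (hf : Sm f) (x y t : ℝ) :
    DifferentiableAt ℝ (fun t' => f x y t') t := by
  have : (fun t' : ℝ => f x y t')
      = (fun p : ℝ × ℝ × ℝ => f p.1 p.2.1 p.2.2) ∘ (fun t' : ℝ => (x, y, t')) := rfl
  rw [this]
  exact (hf.diff.comp (Differentiable.prodMk (differentiable_const _)
    (Differentiable.prodMk (differentiable_const _) differentiable_fun_id))).differentiableAt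

lemma sliceX_hasDerivAt {f : F3} (hf : Sm f) (x y t : ℝ) :
    HasDerivAt (fun x' => f x' y t) (px f x y t) x :=
  (sliceX_diff hf x y t).hasDerivAt

lemma sliceY_hasDerivAt {f : F3} (hf : Sm f) (x y t : ℝ) :
    HasDerivAt (fun y' => f x y' t) (py f x y t) y :=
  (sliceY_diff hf x y t).hasDerivAt

lemma sliceT_hasDerivAt {f : F3} (hf : Sm f) (x y t : ℝ) :
    HasDerivAt (fun t' => f x y t') (pt f x y t) t :=
  (sliceT_diff hf x y t).hasDerivAt

lemma px_eq_fderiv {f : F3} (hf : Sm f) (x y t : ℝ) :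
    px f x y t
      = fderiv ℝ (fun p : ℝ × ℝ × ℝ => f p.1 p.2.1 p.2.2) (x, y, t) (1, (0 : ℝ × ℝ)) := by
  have h1 : HasDerivAt (fun x' : ℝ => (x', y, t)) ((1 : ℝ), (0 : ℝ × ℝ)) x :=
    HasDerivAt.prodMk (hasDerivAt_id x) (hasDerivAt_const x (y, t))
  have h2 := (hf.diff (x, y, t)).hasFDerivAt.comp_hasDerivAt x h1
  have h3 : HasDerivAt (fun x' : ℝ => f x' y t)
      (fderiv ℝ (fun p : ℝ × ℝ × ℝ => f p.1 p.2.1 p.2.2) (x, y, t) (1, (0 : ℝ × ℝ))) x := h2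
  exact h3.deriv

lemma py_eq_fderiv {f : F3} (hf : Sm f) (x y t : ℝ) :
    py f x y t
      = fderiv ℝ (fun p : ℝ × ℝ × ℝ => f p.1 p.2.1 p.2.2) (x, y, t) ((0:ℝ), (1:ℝ), (0:ℝ)) := by
  have h1 : HasDerivAt (fun y' : ℝ => (x, y', t)) ((0 : ℝ), (1 : ℝ), (0 : ℝ)) y :=
    HasDerivAt.prodMk (hasDerivAt_const y x) (HasDerivAt.prodMk (hasDerivAt_id y) (hasDerivAt_const y t))
  have h2 := (hf.diff (x, y, t)).hasFDerivAt.comp_hasDerivAt y h1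
  have h3 : HasDerivAt (fun y' : ℝ => f x y' t)
      (fderiv ℝ (fun p : ℝ × ℝ × ℝ => f p.1 p.2.1 p.2.2) (x, y, t) ((0:ℝ), (1:ℝ), (0:ℝ))) y := h2
  exact h3.deriv

lemma pt_eq_fderiv {f : F3} (hf : Sm f) (x y t : ℝ) :
    pt f x y t
      = fderiv ℝ (fun p : ℝ × ℝ × ℝ => f p.1 p.2.1 p.2.2) (x, y, t) ((0:ℝ), (0:ℝ), (1:ℝ)) := by
  have h1 : HasDerivAt (fun t' : ℝ => (x, y, t')) ((0 : ℝ), (0 : ℝ), (1 : ℝ)) t :=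
    HasDerivAt.prodMk (hasDerivAt_const t x) (HasDerivAt.prodMk (hasDerivAt_const t y) (hasDerivAt_id t))
  have h2 := (hf.diff (x, y, t)).hasFDerivAt.comp_hasDerivAt t h1
  have h3 : HasDerivAt (fun t' : ℝ => f x y t')
      (fderiv ℝ (fun p : ℝ × ℝ × ℝ => f p.1 p.2.1 p.2.2) (x, y, t) ((0:ℝ), (0:ℝ), (1:ℝ))) t := h2
  exact h3.deriv

lemma Sm.fderivApply {f : F3} (hf : Sm f) (v : ℝ × ℝ × ℝ) :
    ContDiff ℝ (⊤ : ℕ∞)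
      (fun p : ℝ × ℝ × ℝ => fderiv ℝ (fun p : ℝ × ℝ × ℝ => f p.1 p.2.1 p.2.2) p v) :=
  ((contDiff_infty_iff_fderiv.mp hf).2).clm_apply contDiff_const

lemma sm_px {f : F3} (hf : Sm f) : Sm (px f) := by
  have : (fun p : ℝ × ℝ × ℝ => px f p.1 p.2.1 p.2.2)
      = fun p : ℝ × ℝ × ℝ =>
        fderiv ℝ (fun p : ℝ × ℝ × ℝ => f p.1 p.2.1 p.2.2) p (1, (0 : ℝ × ℝ)) := by
    funext p
    exact px_eq_fderiv hf p.1 p.2.1 p.2.2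
  rw [Sm, this]
  exact hf.fderivApply _

lemma sm_py {f : F3} (hf : Sm f) : Sm (py f) := by
  have : (fun p : ℝ × ℝ × ℝ => py f p.1 p.2.1 p.2.2)
      = fun p : ℝ × ℝ × ℝ =>
        fderiv ℝ (fun p : ℝ × ℝ × ℝ => f p.1 p.2.1 p.2.2) p ((0:ℝ), (1:ℝ), (0:ℝ)) := by
    funext p
    exact py_eq_fderiv hf p.1 p.2.1 p.2.2
  rw [Sm, this]
  exact hf.fderivApply _

lemma fderiv_apply_swap {φ : ℝ × ℝ × ℝ → ℝ} (hφ : ContDiff ℝ (⊤ : ℕ∞) φ)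
    (p : ℝ × ℝ × ℝ) (v w : ℝ × ℝ × ℝ) :
    fderiv ℝ (fun q => fderiv ℝ φ q v) p w = fderiv ℝ (fun q => fderiv ℝ φ q w) p v := by
  have hd : ContDiff ℝ (⊤ : ℕ∞) (fderiv ℝ φ) := (contDiff_infty_iff_fderiv.mp hφ).2
  have h1 : ∀ v : ℝ × ℝ × ℝ, fderiv ℝ (fun q => fderiv ℝ φ q v) p
      = (fderiv ℝ (fderiv ℝ φ) p).flip v := by
    intro v
    rw [fderiv_clm_apply ((hd.differentiable (by simp)) p) (differentiableAt_const v)]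
    simp
  rw [h1 v, h1 w]
  exact second_derivative_symmetric (fun z => ((hφ.differentiable (by simp)) z).hasFDerivAt)
    ((hd.differentiable (by simp)) p).hasFDerivAt w v

lemma swap_py_px {f : F3} (hf : Sm f) (x y t : ℝ) :
    py (px f) x y t = px (py f) x y t := by
  have e1 : (fun p : ℝ × ℝ × ℝ => px f p.1 p.2.1 p.2.2)
      = fun q => fderiv ℝ (fun p : ℝ × ℝ × ℝ => f p.1 p.2.1 p.2.2) q (1, (0 : ℝ × ℝ)) := by
    funext p; exact px_eq_fderiv hf p.1 p.2.1 p.2.2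
  have e2 : (fun p : ℝ × ℝ × ℝ => py f p.1 p.2.1 p.2.2)
      = fun q => fderiv ℝ (fun p : ℝ × ℝ × ℝ => f p.1 p.2.1 p.2.2) q ((0:ℝ), (1:ℝ), (0:ℝ)) := by
    funext p; exact py_eq_fderiv hf p.1 p.2.1 p.2.2
  rw [py_eq_fderiv (sm_px hf) x y t, px_eq_fderiv (sm_py hf) x y t, e1, e2]
  exact fderiv_apply_swap hf (x, y, t) _ _

lemma swap_pt_px {f : F3} (hf : Sm f) (x y t : ℝ) :
    pt (px f) x y t = px (pt f) x y t := by
  have hpt : Sm (pt f) := by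
    have : (fun p : ℝ × ℝ × ℝ => pt f p.1 p.2.1 p.2.2)
        = fun p : ℝ × ℝ × ℝ =>
          fderiv ℝ (fun p : ℝ × ℝ × ℝ => f p.1 p.2.1 p.2.2) p ((0:ℝ), (0:ℝ), (1:ℝ)) := by
      funext p; exact pt_eq_fderiv hf p.1 p.2.1 p.2.2
    rw [Sm, this]
    exact hf.fderivApply _
  have e1 : (fun p : ℝ × ℝ × ℝ => px f p.1 p.2.1 p.2.2)
      = fun q => fderiv ℝ (fun p : ℝ × ℝ × ℝ => f p.1 p.2.1 p.2.2) q (1, (0 : ℝ × ℝ)) := by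
    funext p; exact px_eq_fderiv hf p.1 p.2.1 p.2.2
  have e2 : (fun p : ℝ × ℝ × ℝ => pt f p.1 p.2.1 p.2.2)
      = fun q => fderiv ℝ (fun p : ℝ × ℝ × ℝ => f p.1 p.2.1 p.2.2) q ((0:ℝ), (0:ℝ), (1:ℝ)) := by
    funext p; exact pt_eq_fderiv hf p.1 p.2.1 p.2.2
  rw [pt_eq_fderiv (sm_px hf) x y t, px_eq_fderiv hpt x y t, e1, e2]
  exact fderiv_apply_swap hf (x, y, t) _ _

end KPaux

set_option linter.unusedSectionVars false

namespace KPaux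

noncomputable def PX : ℕ → F3 → F3
  | 0, f => f
  | k+1, f => px (PX k f)

lemma PX_zero (f : F3) : PX 0 f = f := rfl
lemma PX_succ (k : ℕ) (f : F3) : PX (k+1) f = px (PX k f) := rfl

lemma sm_PX {f : F3} (hf : Sm f) : ∀ k, Sm (PX k f)
  | 0 => hf
  | (k+1) => sm_px (sm_PX hf k)

lemma flow_y {f : F3} (hf : Sm f) (hfl : LinFlow f) :
    ∀ k x y t, py (PX k f) x y t = PX (k+1+1) f x y t := by
  intro k
  induction k with
  | zero => exact fun x y t => hfl.1 x y t
  | succ k ih =>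
    intro x y t
    have e : py (PX k f) = PX (k+1+1) f := by
      funext a b c; exact ih a b c
    calc py (PX (k+1) f) x y t
        = px (py (PX k f)) x y t := swap_py_px (sm_PX hf k) x y t
      _ = px (PX (k+1+1) f) x y t := by rw [e]
      _ = PX (k+1+1+1) f x y t := rfl

lemma flow_t {f : F3} (hf : Sm f) (hfl : LinFlow f) :
    ∀ k x y t, pt (PX k f) x y t = PX (k+1+1+1) f x y t := by
  intro k
  induction k with
  | zero => exact fun x y t => hfl.2 x y t
  | succ k ih =>
    intro x y t
    have e : pt (PX k f) = PX (k+1+1+1) f := by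
      funext a b c; exact ih a b c
    calc pt (PX (k+1) f) x y t
        = px (pt (PX k f)) x y t := swap_pt_px (sm_PX hf k) x y t
      _ = px (PX (k+1+1+1) f) x y t := by rw [e]
      _ = PX (k+1+1+1+1) f x y t := rfl

lemma smdF {F : ℝ → ℝ} (hF : ContDiff ℝ (⊤ : ℕ∞) F) :
    ∀ m, ContDiff ℝ (⊤ : ℕ∞) (deriv^[m] F)
  | 0 => hF
  | (m+1) => by
      rw [Function.iterate_succ_apply']
      exact (contDiff_infty_iff_deriv.mp (smdF hF m)).2

inductive Ex : Type where
  | H : ℕ → Ex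
  | G : ℕ → Ex
  | C : ℕ → Ex
  | IH : Ex
  | K : ℝ → Ex
  | add : Ex → Ex → Ex
  | mul : Ex → Ex → Ex

noncomputable def ev (α β : ℝ) (h g : F3) (F : ℝ → ℝ) : Ex → F3
  | .H k => PX k h
  | .G k => PX k g
  | .C m => fun _ y t => deriv^[m] F (α * y + β * t)
  | .IH => fun x y t => (h x y t)⁻¹
  | .K c => fun _ _ _ => c
  | .add a b => fun x y t => ev α β h g F a x y t + ev α β h g F b x y t
  | .mul a b => fun x y t => ev α β h g F a x y t * ev α β h g F b x y t

def DX : Ex → Ex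
  | .H k => .H (k+1)
  | .G k => .G (k+1)
  | .C _ => .K 0
  | .IH => .mul (.K (-1)) (.mul (.H 1) (.mul .IH .IH))
  | .K _ => .K 0
  | .add a b => .add (DX a) (DX b)
  | .mul a b => .add (.mul (DX a) b) (.mul a (DX b))

def DY (α : ℝ) : Ex → Ex
  | .H k => .add (.H (k+1+1)) (.mul (.K α) (.mul (.C 1) (.G k)))
  | .G k => .G (k+1+1)
  | .C m => .mul (.K α) (.C (m+1))
  | .IH => .mul (.K (-1)) (.mul (.add (.H (1+1)) (.mul (.K α) (.mul (.C 1) (.G 0)))) (.mul .IH .IH))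
  | .K _ => .K 0
  | .add a b => .add (DY α a) (DY α b)
  | .mul a b => .add (.mul (DY α a) b) (.mul a (DY α b))

def DT (β : ℝ) : Ex → Ex
  | .H k => .add (.H (k+1+1+1)) (.mul (.K β) (.mul (.C 1) (.G k)))
  | .G k => .G (k+1+1+1)
  | .C m => .mul (.K β) (.C (m+1))
  | .IH => .mul (.K (-1)) (.mul (.add (.H (1+1+1)) (.mul (.K β) (.mul (.C 1) (.G 0)))) (.mul .IH .IH))
  | .K _ => .K 0
  | .add a b => .add (DT β a) (DT β b)
  | .mul a b => .add (.mul (DT β a) b) (.mul a (DT β b))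

section Master

variable {α β : ℝ} {f g : F3} {F : ℝ → ℝ} {h : F3}
variable (hf : Sm f) (hg : Sm g) (hF : ContDiff ℝ (⊤ : ℕ∞) F)
variable (hfl : LinFlow f) (hgl : LinFlow g)
variable (hh : h = fun x y t => f x y t + F (α * y + β * t) * g x y t)
variable (hne : ∀ x y t, h x y t ≠ 0)

include hf hg hF hh

lemma sm_h : Sm h := by
  subst hh
  have hs : ContDiff ℝ (⊤ : ℕ∞) (fun p : ℝ × ℝ × ℝ => α * p.2.1 + β * p.2.2) := by
    fun_prop
  exact hf.add ((hF.comp hs).mul hg)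

lemma PX_h : ∀ k x y t, PX k h x y t
    = PX k f x y t + F (α * y + β * t) * PX k g x y t := by
  intro k
  induction k with
  | zero =>
    intro x y t
    show h x y t = f x y t + F (α * y + β * t) * g x y t
    rw [hh]
  | succ k ih =>
    intro x y t
    have e : (fun x' => PX k h x' y t)
        = fun x' => PX k f x' y t + F (α * y + β * t) * PX k g x' y t := by
      funext a; exact ih a y t
    have hd : HasDerivAt
        (fun x' => PX k f x' y t + F (α * y + β * t) * PX k g x' y t)
        (PX (k+1) f x y t + F (α * y + β * t) * PX (k+1) g x y t) x :=
      (sliceX_hasDerivAt (sm_PX hf k) x y t).add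
        (HasDerivAt.const_mul (F (α * y + β * t)) (sliceX_hasDerivAt (sm_PX hg k) x y t))
    show deriv (fun x' => PX k h x' y t) x = _
    rw [e, hd.deriv]

include hfl hgl

lemma h_flow_y : ∀ k x y t, py (PX k h) x y t
    = PX (k+1+1) h x y t + α * (deriv F (α * y + β * t) * PX k g x y t) := by
  intro k
  induction k with
  | zero =>
    intro x y t
    have harg : HasDerivAt (fun y' : ℝ => α * y' + β * t) α y := by
      simpa using ((hasDerivAt_id y).const_mul α).add_const (β * t)
    have hFd : Differentiable ℝ F := hF.differentiable (by simp)
    have hchain : HasDerivAt (fun y' : ℝ => F (α * y' + β * t))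
        (deriv F (α * y + β * t) * α) y :=
      (hFd (α * y + β * t)).hasDerivAt.comp y harg
    have hd : HasDerivAt (fun y' => f x y' t + F (α * y' + β * t) * g x y' t)
        (py f x y t + ((deriv F (α * y + β * t) * α) * g x y t
          + F (α * y + β * t) * py g x y t)) y :=
      (sliceY_hasDerivAt hf x y t).add (hchain.mul (sliceY_hasDerivAt hg x y t))
    have e : (fun y' => h x y' t) = fun y' => f x y' t + F (α * y' + β * t) * g x y' t := by
      funext b; rw [hh]
    show deriv (fun y' => h x y' t) y = _
    rw [e, hd.deriv]
    have e1 : py f x y t = PX (0+1+1) f x y t := hfl.1 x y t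
    have e2 : py g x y t = PX (0+1+1) g x y t := hgl.1 x y t
    rw [e1, e2, PX_h hf hg hF hh (0+1+1) x y t]
    show _ = PX (0+1+1) f x y t + F (α * y + β * t) * PX (0+1+1) g x y t
      + α * (deriv F (α * y + β * t) * PX 0 g x y t)
    have e3 : PX 0 g x y t = g x y t := rfl
    rw [e3]; ring
  | succ k ih =>
    intro x y t
    have e : py (PX k h) = fun x y t => PX (k+1+1) h x y t
        + α * (deriv F (α * y + β * t) * PX k g x y t) := by
      funext a b c; exact ih a b c
    have hd : HasDerivAt (fun x' => PX (k+1+1) h x' y t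
        + α * (deriv F (α * y + β * t) * PX k g x' y t))
        (PX (k+1+1+1) h x y t + α * (deriv F (α * y + β * t) * PX (k+1) g x y t)) x := by
      have h1 : HasDerivAt (fun x' => PX (k+1+1) h x' y t)
          (PX (k+1+1+1) h x y t) x :=
        sliceX_hasDerivAt (sm_PX (sm_h hf hg hF hh) (k+1+1)) x y t
      have h0g : HasDerivAt (fun x' => PX k g x' y t) (PX (k+1) g x y t) x :=
        sliceX_hasDerivAt (sm_PX hg k) x y t
      have h2 : HasDerivAt (fun x' => α * (deriv F (α * y + β * t) * PX k g x' y t))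
          (α * (deriv F (α * y + β * t) * PX (k+1) g x y t)) x :=
        HasDerivAt.const_mul α (HasDerivAt.const_mul (deriv F (α * y + β * t)) h0g)
      exact h1.add h2
    calc py (PX (k+1) h) x y t
        = px (py (PX k h)) x y t := swap_py_px (sm_PX (sm_h hf hg hF hh) k) x y t
      _ = _ := by
          show deriv (fun x' => py (PX k h) x' y t) x = _
          rw [e, hd.deriv]

lemma h_flow_t : ∀ k x y t, pt (PX k h) x y t
    = PX (k+1+1+1) h x y t + β * (deriv F (α * y + β * t) * PX k g x y t) := by
  intro k
  induction k with
  | zero =>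
    intro x y t
    have harg : HasDerivAt (fun t' : ℝ => α * y + β * t') β t := by
      simpa using (((hasDerivAt_id t).const_mul β).const_add (α * y))
    have hFd : Differentiable ℝ F := hF.differentiable (by simp)
    have hchain : HasDerivAt (fun t' : ℝ => F (α * y + β * t'))
        (deriv F (α * y + β * t) * β) t :=
      (hFd (α * y + β * t)).hasDerivAt.comp t harg
    have hd : HasDerivAt (fun t' => f x y t' + F (α * y + β * t') * g x y t')
        (pt f x y t + ((deriv F (α * y + β * t) * β) * g x y t
          + F (α * y + β * t) * pt g x y t)) t :=
      (sliceT_hasDerivAt hf x y t).add (hchain.mul (sliceT_hasDerivAt hg x y t))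
    have e : (fun t' => h x y t') = fun t' => f x y t' + F (α * y + β * t') * g x y t' := by
      funext c; rw [hh]
    show deriv (fun t' => h x y t') t = _
    rw [e, hd.deriv]
    have e1 : pt f x y t = PX (0+1+1+1) f x y t := hfl.2 x y t
    have e2 : pt g x y t = PX (0+1+1+1) g x y t := hgl.2 x y t
    rw [e1, e2, PX_h hf hg hF hh (0+1+1+1) x y t]
    show _ = PX (0+1+1+1) f x y t + F (α * y + β * t) * PX (0+1+1+1) g x y t
      + β * (deriv F (α * y + β * t) * PX 0 g x y t)
    have e3 : PX 0 g x y t = g x y t := rfl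
    rw [e3]; ring
  | succ k ih =>
    intro x y t
    have e : pt (PX k h) = fun x y t => PX (k+1+1+1) h x y t
        + β * (deriv F (α * y + β * t) * PX k g x y t) := by
      funext a b c; exact ih a b c
    have hd : HasDerivAt (fun x' => PX (k+1+1+1) h x' y t
        + β * (deriv F (α * y + β * t) * PX k g x' y t))
        (PX (k+1+1+1+1) h x y t + β * (deriv F (α * y + β * t) * PX (k+1) g x y t)) x := by
      have h1 : HasDerivAt (fun x' => PX (k+1+1+1) h x' y t)
          (PX (k+1+1+1+1) h x y t) x :=
        sliceX_hasDerivAt (sm_PX (sm_h hf hg hF hh) (k+1+1+1)) x y t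
      have h0g : HasDerivAt (fun x' => PX k g x' y t) (PX (k+1) g x y t) x :=
        sliceX_hasDerivAt (sm_PX hg k) x y t
      have h2 : HasDerivAt (fun x' => β * (deriv F (α * y + β * t) * PX k g x' y t))
          (β * (deriv F (α * y + β * t) * PX (k+1) g x y t)) x :=
        HasDerivAt.const_mul β (HasDerivAt.const_mul (deriv F (α * y + β * t)) h0g)
      exact h1.add h2
    calc pt (PX (k+1) h) x y t
        = px (pt (PX k h)) x y t := swap_pt_px (sm_PX (sm_h hf hg hF hh) k) x y t
      _ = _ := by
          show deriv (fun x' => pt (PX k h) x' y t) x = _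
          rw [e, hd.deriv]

include hne

lemma main_x : ∀ (e : Ex) (x y t : ℝ),
    HasDerivAt (fun x' => ev α β h g F e x' y t) (ev α β h g F (DX e) x y t) x := by
  intro e
  induction e with
  | H k => exact fun x y t => sliceX_hasDerivAt (sm_PX (sm_h hf hg hF hh) k) x y t
  | G k => exact fun x y t => sliceX_hasDerivAt (sm_PX hg k) x y t
  | C m => exact fun x y t => hasDerivAt_const x _
  | IH =>
    intro x y t
    have h0 := (sliceX_hasDerivAt (sm_h hf hg hF hh) x y t).inv (hne x y t)
    have e : -(px h x y t) / (h x y t) ^ 2 = ev α β h g F (DX .IH) x y t := by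
      show _ = (-1 : ℝ) * (px h x y t * ((h x y t)⁻¹ * (h x y t)⁻¹))
      field_simp
    exact e ▸ h0
  | K c => exact fun x y t => hasDerivAt_const x _
  | add a b iha ihb => exact fun x y t => (iha x y t).add (ihb x y t)
  | mul a b iha ihb => exact fun x y t => (iha x y t).mul (ihb x y t)

lemma main_y : ∀ (e : Ex) (x y t : ℝ),
    HasDerivAt (fun y' => ev α β h g F e x y' t) (ev α β h g F (DY α e) x y t) y := by
  intro e
  induction e with
  | H k =>
    intro x y t
    have h0 := sliceY_hasDerivAt (sm_PX (sm_h hf hg hF hh) k) x y t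
    have e : py (PX k h) x y t = ev α β h g F (DY α (.H k)) x y t := by
      rw [h_flow_y hf hg hF hfl hgl hh k x y t]
      show _ = PX (k+1+1) h x y t + α * (deriv^[1] F (α * y + β * t) * PX k g x y t)
      rw [Function.iterate_one]
    exact e ▸ h0
  | G k =>
    intro x y t
    have h0 := sliceY_hasDerivAt (sm_PX hg k) x y t
    have e : py (PX k g) x y t = ev α β h g F (DY α (.G k)) x y t :=
      flow_y hg hgl k x y t
    exact e ▸ h0
  | C m =>
    intro x y t
    have harg : HasDerivAt (fun y' : ℝ => α * y' + β * t) α y := by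
      simpa using ((hasDerivAt_id y).const_mul α).add_const (β * t)
    have hdF : Differentiable ℝ (deriv^[m] F) :=
      (smdF hF m).differentiable (by simp)
    have hcomp := (hdF (α * y + β * t)).hasDerivAt.comp y harg
    have e : deriv (deriv^[m] F) (α * y + β * t) * α
        = ev α β h g F (DY α (.C m)) x y t := by
      show _ = α * deriv^[m+1] F (α * y + β * t)
      rw [Function.iterate_succ_apply']
      ring
    exact e ▸ hcomp
  | IH =>
    intro x y t
    have h0 := (sliceY_hasDerivAt (sm_h hf hg hF hh) x y t).inv (hne x y t)
    have e : -(py h x y t) / (h x y t) ^ 2 = ev α β h g F (DY α .IH) x y t := by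
      have e2 : py h x y t = px (px h) x y t
          + α * (deriv F (α * y + β * t) * g x y t) :=
        h_flow_y hf hg hF hfl hgl hh 0 x y t
      rw [e2]
      show _ = (-1 : ℝ) * ((px (px h) x y t + α * (deriv F (α * y + β * t) * g x y t))
        * ((h x y t)⁻¹ * (h x y t)⁻¹))
      field_simp
    exact e ▸ h0
  | K c => exact fun x y t => hasDerivAt_const y _
  | add a b iha ihb => exact fun x y t => (iha x y t).add (ihb x y t)
  | mul a b iha ihb => exact fun x y t => (iha x y t).mul (ihb x y t)

lemma main_t : ∀ (e : Ex) (x y t : ℝ),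
    HasDerivAt (fun t' => ev α β h g F e x y t') (ev α β h g F (DT β e) x y t) t := by
  intro e
  induction e with
  | H k =>
    intro x y t
    have h0 := sliceT_hasDerivAt (sm_PX (sm_h hf hg hF hh) k) x y t
    have e : pt (PX k h) x y t = ev α β h g F (DT β (.H k)) x y t := by
      rw [h_flow_t hf hg hF hfl hgl hh k x y t]
      show _ = PX (k+1+1+1) h x y t + β * (deriv^[1] F (α * y + β * t) * PX k g x y t)
      rw [Function.iterate_one]
    exact e ▸ h0
  | G k =>
    intro x y t
    have h0 := sliceT_hasDerivAt (sm_PX hg k) x y t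
    have e : pt (PX k g) x y t = ev α β h g F (DT β (.G k)) x y t :=
      flow_t hg hgl k x y t
    exact e ▸ h0
  | C m =>
    intro x y t
    have harg : HasDerivAt (fun t' : ℝ => α * y + β * t') β t := by
      simpa using (((hasDerivAt_id t).const_mul β).const_add (α * y))
    have hdF : Differentiable ℝ (deriv^[m] F) :=
      (smdF hF m).differentiable (by simp)
    have hcomp := (hdF (α * y + β * t)).hasDerivAt.comp t harg
    have e : deriv (deriv^[m] F) (α * y + β * t) * β
        = ev α β h g F (DT β (.C m)) x y t := by
      show _ = β * deriv^[m+1] F (α * y + β * t)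
      rw [Function.iterate_succ_apply']
      ring
    exact e ▸ hcomp
  | IH =>
    intro x y t
    have h0 := (sliceT_hasDerivAt (sm_h hf hg hF hh) x y t).inv (hne x y t)
    have e : -(pt h x y t) / (h x y t) ^ 2 = ev α β h g F (DT β .IH) x y t := by
      have e2 : pt h x y t = px (px (px h)) x y t
          + β * (deriv F (α * y + β * t) * g x y t) :=
        h_flow_t hf hg hF hfl hgl hh 0 x y t
      rw [e2]
      show _ = (-1 : ℝ) * ((px (px (px h)) x y t + β * (deriv F (α * y + β * t) * g x y t))
        * ((h x y t)⁻¹ * (h x y t)⁻¹))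
      field_simp
    exact e ▸ h0
  | K c => exact fun x y t => hasDerivAt_const t _
  | add a b iha ihb => exact fun x y t => (iha x y t).add (ihb x y t)
  | mul a b iha ihb => exact fun x y t => (iha x y t).mul (ihb x y t)

lemma px_ev (e : Ex) : px (ev α β h g F e) = ev α β h g F (DX e) := by
  funext a b c
  exact (main_x hf hg hF hfl hgl hh hne e a b c).deriv

lemma py_ev (e : Ex) : py (ev α β h g F e) = ev α β h g F (DY α e) := by
  funext a b c
  exact (main_y hf hg hF hfl hgl hh hne e a b c).deriv

lemma pt_ev (e : Ex) : pt (ev α β h g F e) = ev α β h g F (DT β e) := by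
  funext a b c
  exact (main_t hf hg hF hfl hgl hh hne e a b c).deriv

end Master

end KPaux

set_option maxHeartbeats 4000000 in
open KPaux in
/-- under the N=1 dressing, (E0) holds identically on ℝ³. -/
theorem dressing_N1_E0 (α β : ℝ) (f g : F3) (F : ℝ → ℝ)
    (hf : Smooth3 f) (hg : Smooth3 g) (hF : ContDiff ℝ (⊤ : ℕ∞) F)
    (hfl : LinFlow f) (hgl : LinFlow g)
    (h : F3) (hh : h = fun x y t => f x y t + F (α * y + β * t) * g x y t)
    (hne : ∀ x y t, h x y t ≠ 0)
    (v u q r : F3)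
    (hv : v = fun x y t => px h x y t / h x y t)
    (hu : u = px v)
    (hq : q = fun x y t =>
      -(deriv F (α * y + β * t)) * (px g x y t - (px h x y t / h x y t) * g x y t))
    (hr : r = fun x y t => 1 / h x y t) :
    E0₁ α β u v q r := by
  have smf : Sm f := Smooth3.sm hf
  have smg : Sm g := Smooth3.sm hg
  have hF' : ContDiff ℝ (⊤ : ℕ∞) F := hF.of_le (by simp)
  have Hx : ∀ e : Ex, px (ev α β h g F e) = ev α β h g F (DX e) :=
    px_ev smf smg hF' hfl hgl hh hne
  have Hy : ∀ e : Ex, py (ev α β h g F e) = ev α β h g F (DY α e) :=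
    py_ev smf smg hF' hfl hgl hh hne
  have Ht : ∀ e : Ex, pt (ev α β h g F e) = ev α β h g F (DT β e) :=
    pt_ev smf smg hF' hfl hgl hh hne
  have hveq : v = ev α β h g F (.mul (.H 1) .IH) := by
    funext a b c
    rw [hv]
    exact div_eq_mul_inv _ _
  have hueq : u = ev α β h g F (DX (.mul (.H 1) .IH)) := by
    rw [hu, hveq, Hx]
  have hreq : r = ev α β h g F .IH := by
    funext a b c
    rw [hr]
    exact one_div _
  have hqeq : q = ev α β h g F
      (.mul (.K (-1)) (.mul (.C 1) (.add (.G 1)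
        (.mul (.K (-1)) (.mul (.mul (.H 1) .IH) (.G 0)))))) := by
    funext a b c
    rw [hq]
    show -(deriv F (α * b + β * c)) * (px g a b c - px h a b c / h a b c * g a b c)
        = (-1 : ℝ) * (deriv F (α * b + β * c) * (px g a b c
          + (-1 : ℝ) * (px h a b c * (h a b c)⁻¹ * g a b c)))
    rw [div_eq_mul_inv]
    ring
  have hqr : (fun x y t => q x y t * r x y t)
      = ev α β h g F (.mul
        (.mul (.K (-1)) (.mul (.C 1) (.add (.G 1)
          (.mul (.K (-1)) (.mul (.mul (.H 1) .IH) (.G 0)))))) .IH) := by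
    rw [hqeq, hreq]
    rfl
  unfold E0₁
  intro x y t
  rw [hqr, hueq, hveq, hqeq, hreq]
  simp only [Hx, Hy, Ht]
  have P0 : ∀ w : F3, PX 0 w = w := fun _ => rfl
  have P1 : ∀ w : F3, PX 1 w = px w := fun _ => rfl
  simp only [ev, DX, DY, DT, PX_succ, P1, P0]
  ring
end

section
/- For the two-soliton data, the 2×2 Wronskian in x satisfies the identity Wr(h₁,h₂) := h₁·∂_x h₂ − (∂_x h₁)·h₂ = (λ₂−λ₁)·e^{ξ₁+ξ₂}·Θ; consequently, at every point where Θ ≠ 0, ∂_x(∂_x Wr(h₁,h₂)/Wr(h₁,h₂)) = ∂_x(Θ_x/Θ), i.e. the dressed potential ∂_x² ln Wr(h₁,h₂) equals ∂_x² ln Θ. -/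
/-- The 2×2 Wronskian (in x) of two functions of (x,y,t). -/
noncomputable def Wr₂ (h₁ h₂ : F3) : F3 :=
  fun x y t => h₁ x y t * px h₂ x y t - px h₁ x y t * h₂ x y t


private lemma hd_exp (μ a b x : ℝ) :
    HasDerivAt (fun x' : ℝ => Real.exp (μ * x' + a + b)) (μ * Real.exp (μ * x + a + b)) x := by
  have h1 : HasDerivAt (fun x' : ℝ => μ * x' + a + b) μ x := by
    simpa using (((hasDerivAt_id x).const_mul μ).add_const a).add_const b
  simpa [mul_comm] using h1.exp

/-- for the two-soliton data, Wr(h₁,h₂) = (λ₂−λ₁)·e^{ξ₁+ξ₂}·Θ, and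
consequently wherever Θ ≠ 0 the dressed potential ∂ₓ² ln Wr(h₁,h₂) equals ∂ₓ² ln Θ. -/
theorem two_soliton_wronskian_identity (α β lam₁ lam₂ mu₁ mu₂ : ℝ) (hlam : lam₁ ≠ lam₂)
    (F₁ F₂ : ℝ → ℝ) (hF₁ : ContDiff ℝ (⊤ : ℕ∞) F₁) (hF₂ : ContDiff ℝ (⊤ : ℕ∞) F₂)
    (ξ₁ ξ₂ η₁ η₂ : F3) (X : ℝ → ℝ → ℝ) (h₁ h₂ Θ : F3)
    (hξ₁ : ξ₁ = fun x y t => lam₁ * x + lam₁ ^ 2 * y + lam₁ ^ 3 * t)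
    (hξ₂ : ξ₂ = fun x y t => lam₂ * x + lam₂ ^ 2 * y + lam₂ ^ 3 * t)
    (hη₁ : η₁ = fun x y t => mu₁ * x + mu₁ ^ 2 * y + mu₁ ^ 3 * t)
    (hη₂ : η₂ = fun x y t => mu₂ * x + mu₂ ^ 2 * y + mu₂ ^ 3 * t)
    (hX : X = fun y t => α * y + β * t)
    (hh₁ : h₁ = fun x y t => Real.exp (ξ₁ x y t) + F₁ (X y t) * Real.exp (η₁ x y t))
    (hh₂ : h₂ = fun x y t => Real.exp (ξ₂ x y t) + F₂ (X y t) * Real.exp (η₂ x y t))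
    (hΘ : Θ = fun x y t =>
      1 + F₁ (X y t) * ((lam₂ - mu₁) / (lam₂ - lam₁)) * Real.exp (η₁ x y t - ξ₁ x y t)
        + F₂ (X y t) * ((mu₂ - lam₁) / (lam₂ - lam₁)) * Real.exp (η₂ x y t - ξ₂ x y t)
        + F₁ (X y t) * F₂ (X y t) * ((mu₂ - mu₁) / (lam₂ - lam₁))
            * Real.exp (η₁ x y t + η₂ x y t - ξ₁ x y t - ξ₂ x y t))
    :
    (∀ x y t, Wr₂ h₁ h₂ x y t =
      (lam₂ - lam₁) * Real.exp (ξ₁ x y t + ξ₂ x y t) * Θ x y t) ∧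
    (∀ x y t, Θ x y t ≠ 0 →
      px (fun x y t => px (Wr₂ h₁ h₂) x y t / Wr₂ h₁ h₂ x y t) x y t =
      px (fun x y t => px Θ x y t / Θ x y t) x y t) := by
  have hc : lam₂ - lam₁ ≠ 0 := sub_ne_zero_of_ne hlam.symm
  have hder : ∀ (l m G x y t : ℝ),
      deriv (fun x' => Real.exp (l * x' + l ^ 2 * y + l ^ 3 * t)
        + G * Real.exp (m * x' + m ^ 2 * y + m ^ 3 * t)) x
      = l * Real.exp (l * x + l ^ 2 * y + l ^ 3 * t)
        + G * (m * Real.exp (m * x + m ^ 2 * y + m ^ 3 * t)) := by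
    intro l m G x y t
    exact ((hd_exp l (l ^ 2 * y) (l ^ 3 * t) x).add
      ((hd_exp m (m ^ 2 * y) (m ^ 3 * t) x).const_mul G)).deriv
  have key : ∀ x y t, Wr₂ h₁ h₂ x y t =
      (lam₂ - lam₁) * Real.exp (ξ₁ x y t + ξ₂ x y t) * Θ x y t := by
    intro x y t
    simp only [Wr₂, px, hh₁, hh₂, hξ₁, hξ₂, hη₁, hη₂, hX, hΘ]
    rw [hder, hder]
    simp only [Real.exp_add, Real.exp_sub]
    field_simp
    ring
  refine ⟨key, ?_⟩
  intro x y t hθ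
  have hgd : Differentiable ℝ (fun s => Θ s y t) := by
    simp only [hΘ, hξ₁, hξ₂, hη₁, hη₂, hX]
    fun_prop
  have hWfun : (fun s => Wr₂ h₁ h₂ s y t)
      = fun s => (lam₂ - lam₁) *
          Real.exp ((lam₁ + lam₂) * s + (lam₁ ^ 2 * y + lam₁ ^ 3 * t)
            + (lam₂ ^ 2 * y + lam₂ ^ 3 * t)) * Θ s y t := by
    funext s
    rw [key s y t, hξ₁, hξ₂]
    rw [show (lam₁ * s + lam₁ ^ 2 * y + lam₁ ^ 3 * t) + (lam₂ * s + lam₂ ^ 2 * y + lam₂ ^ 3 * t)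
        = (lam₁ + lam₂) * s + (lam₁ ^ 2 * y + lam₁ ^ 3 * t) + (lam₂ ^ 2 * y + lam₂ ^ 3 * t)
        from by ring]
  have hpxW : ∀ s, deriv (fun s' => Wr₂ h₁ h₂ s' y t) s
      = (lam₂ - lam₁) * Real.exp ((lam₁ + lam₂) * s + (lam₁ ^ 2 * y + lam₁ ^ 3 * t)
            + (lam₂ ^ 2 * y + lam₂ ^ 3 * t))
          * ((lam₁ + lam₂) * Θ s y t + deriv (fun s' => Θ s' y t) s) := by
    intro s
    rw [hWfun]
    have h1 := ((hd_exp (lam₁ + lam₂) (lam₁ ^ 2 * y + lam₁ ^ 3 * t)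
        (lam₂ ^ 2 * y + lam₂ ^ 3 * t) s).const_mul (lam₂ - lam₁)).mul
        ((hgd s).hasDerivAt)
    refine h1.deriv.trans ?_
    ring
  have hne : ∀ᶠ s in nhds x, Θ s y t ≠ 0 := by
    have hct : ContinuousAt (fun s => Θ s y t) x := (hgd.continuous).continuousAt
    exact hct.eventually_ne hθ
  have hev : (fun x' => deriv (fun s => Wr₂ h₁ h₂ s y t) x' / Wr₂ h₁ h₂ x' y t)
      =ᶠ[nhds x] (fun x' => (lam₁ + lam₂) + deriv (fun s => Θ s y t) x' / Θ x' y t) := by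
    filter_upwards [hne] with s hs
    rw [hpxW s, congrFun hWfun s]
    field_simp
  show deriv (fun x' => deriv (fun s => Wr₂ h₁ h₂ s y t) x' / Wr₂ h₁ h₂ x' y t) x
      = deriv (fun x' => deriv (fun s => Θ s y t) x' / Θ x' y t) x
  rw [hev.deriv_eq]
  exact deriv_const_add (lam₁ + lam₂)
end

section
/- (Concrete form of the Oevel–Strampp inversion lemma W^{-1} = Σ h_i ∂^{-1} r_i, right-inverse half.) For every smooth φ : ℝ → ℝ and every x₀ ∈ ℝ, the function ψ(x) = Σ_{i=1}^N h_i(x)·∫_{x₀}^{x} r_i(s)φ(s) ds satisfies W(ψ) = φ identically on ℝ. -/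
/-- The m×m Wronskian of a family of functions of one variable:
`Wr(p₁,…,p_m) = det(∂^{a−1} p_b)`. -/
noncomputable def Wr1 {m : ℕ} (h : Fin m → ℝ → ℝ) : ℝ → ℝ :=
  fun x => Matrix.det (Matrix.of fun a b : Fin m => iteratedDeriv a.1 (h b) x)

/-- The dressing operator: `W(φ) = Wr(h₁,…,h_N,φ) / Wr(h₁,…,h_N)`. -/
noncomputable def Wop {n : ℕ} (h : Fin (n + 1) → ℝ → ℝ) (φ : ℝ → ℝ) : ℝ → ℝ :=
  fun x => Wr1 (Fin.snoc h φ) x / Wr1 h x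

open Matrix in
/-- Oevel–Strampp inversion, right-inverse half: for any smooth φ and
any basepoint x₀, the function `ψ = Σ_i h_i·∫_{x₀}^{·} r_i φ` satisfies `W(ψ) = φ`. -/
theorem oevel_strampp_right_inverse (n : ℕ) (h : Fin (n + 1) → ℝ → ℝ)
    (hsm : ∀ i, ContDiff ℝ (⊤ : ℕ∞) (h i))
    (hW : ∀ x, Wr1 h x ≠ 0)
    (r : Fin (n + 1) → ℝ → ℝ)
    (hr : ∀ i, r i = fun x => (-1 : ℝ) ^ (n - i.1) *
      (Wr1 (fun j => h (i.succAbove j)) x / Wr1 h x))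
    (φ : ℝ → ℝ) (hφ : ContDiff ℝ (⊤ : ℕ∞) φ) (x₀ : ℝ)
    (ψ : ℝ → ℝ)
    (hψ : ψ = fun x => ∑ i, h i x * ∫ s in x₀..x, r i s * φ s) :
    ∀ x : ℝ, Wop h ψ x = φ x := by
  classical
  set g : Fin (n + 1) → ℝ → ℝ := fun i x => ∫ s in x₀..x, r i s * φ s with hg
  -- continuity facts
  have hcW : Continuous (Wr1 h) := by
    unfold Wr1
    exact Continuous.matrix_det
      (continuous_matrix fun a b => (hsm b).continuous_iteratedDeriv a.1 (by exact_mod_cast le_top))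
  have hcWi : ∀ i : Fin (n + 1), Continuous (Wr1 fun j => h (i.succAbove j)) := by
    intro i
    unfold Wr1
    exact Continuous.matrix_det
      (continuous_matrix fun a b => (hsm _).continuous_iteratedDeriv a.1 (by exact_mod_cast le_top))
  have hcr : ∀ i, Continuous (r i) := by
    intro i
    rw [hr i]
    exact continuous_const.mul ((hcWi i).div hcW hW)
  have hgd : ∀ (i : Fin (n + 1)) (y : ℝ), HasDerivAt (g i) (r i y * φ y) y := fun i y =>
    (((hcr i).mul hφ.continuous).integral_hasStrictDerivAt x₀ y).hasDerivAt
  have hHd : ∀ (i : Fin (n + 1)) (k : ℕ) (y : ℝ),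
      HasDerivAt (iteratedDeriv k (h i)) (iteratedDeriv (k + 1) (h i) y) y := by
    intro i k y
    rw [iteratedDeriv_succ]
    exact (((hsm i).differentiable_iteratedDeriv k (by exact_mod_cast ENat.coe_lt_top k)) y).hasDerivAt
  -- cofactor identity
  have key : ∀ (m : ℕ), m ≤ n → ∀ y : ℝ,
      (∑ i, r i y * iteratedDeriv m (h i) y) = if m = n then 1 else 0 := by
    intro m hm y
    set A : Matrix (Fin (n + 1)) (Fin (n + 1)) ℝ :=
      Matrix.of fun a b => iteratedDeriv (if a = Fin.last n then m else a.1) (h b) y with hA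
    have hsub : ∀ j : Fin (n + 1),
        (A.submatrix (Fin.last n).succAbove j.succAbove).det
          = Wr1 (fun k => h (j.succAbove k)) y := by
      intro j
      unfold Wr1
      congr 1
      ext a b
      simp [hA, Fin.succAbove_last, Fin.ne_of_lt (Fin.castSucc_lt_last a)]
    have hdetA : A.det = ∑ j : Fin (n + 1),
        (-1 : ℝ) ^ (n + j.1) * iteratedDeriv m (h j) y
          * Wr1 (fun k => h (j.succAbove k)) y := by
      rw [Matrix.det_succ_row A (Fin.last n)]
      refine Finset.sum_congr rfl fun j _ => ?_
      rw [hsub]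
      simp [hA]
    have hsum : ∑ i, r i y * iteratedDeriv m (h i) y = A.det / Wr1 h y := by
      rw [hdetA, Finset.sum_div]
      refine Finset.sum_congr rfl fun i _ => ?_
      rw [hr i]
      have hpar : (-1 : ℝ) ^ (n + i.1) = (-1 : ℝ) ^ (n - i.1) := by
        have h2 : n + i.1 = (n - i.1) + 2 * i.1 := by omega
        rw [h2, pow_add, pow_mul, neg_one_sq, one_pow, mul_one]
      rw [hpar]
      ring
    by_cases hmn : m = n
    · have hAe : A.det = Wr1 h y := by
        unfold Wr1
        congr 1
        ext a b
        by_cases ha : a = Fin.last n <;> simp [hA, ha, hmn]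
      rw [hsum, hAe, div_self (hW y), if_pos hmn]
    · have hlt : m < n := lt_of_le_of_ne hm hmn
      have hAe : A.det = 0 := by
        apply Matrix.det_zero_of_row_eq
          (i := Fin.castSucc (⟨m, hlt⟩ : Fin n)) (j := Fin.last n)
        · exact Fin.ne_of_lt (Fin.castSucc_lt_last _)
        · funext b
          simp [hA, Fin.ne_of_lt (Fin.castSucc_lt_last (⟨m, hlt⟩ : Fin n))]
      rw [hsum, hAe, zero_div, if_neg hmn]
  -- derivative formula for ψ
  have key2 : ∀ k : ℕ, k ≤ n + 1 → ∀ y : ℝ, iteratedDeriv k ψ y =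
      (∑ i, g i y * iteratedDeriv k (h i) y) + (if k = n + 1 then φ y else 0) := by
    intro k
    induction k with
    | zero =>
      intro _ y
      rw [iteratedDeriv_zero, hψ, if_neg (by omega), add_zero]
      simp [mul_comm, hg]
    | succ k ih =>
      intro hk y
      have hk' : k ≤ n := by omega
      have hfun : iteratedDeriv k ψ = fun z => ∑ i, g i z * iteratedDeriv k (h i) z := by
        funext z
        rw [ih (by omega) z, if_neg (by omega), add_zero]
      have hD : HasDerivAt (fun z => ∑ i, g i z * iteratedDeriv k (h i) z)
          (∑ i, (r i y * φ y * iteratedDeriv k (h i) y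
            + g i y * iteratedDeriv (k + 1) (h i) y)) y :=
        HasDerivAt.fun_sum fun i _ => (hgd i y).mul (hHd i k y)
      rw [iteratedDeriv_succ, hfun, hD.deriv, Finset.sum_add_distrib]
      have hsplit : ∑ i, r i y * φ y * iteratedDeriv k (h i) y
          = φ y * ∑ i, r i y * iteratedDeriv k (h i) y := by
        rw [Finset.mul_sum]
        exact Finset.sum_congr rfl fun i _ => by ring
      rw [hsplit, key k hk' y]
      by_cases hkn : k = n
      · subst hkn
        rw [if_pos rfl, if_pos rfl]
        ring
      · rw [if_neg hkn, if_neg (fun hc => hkn (by omega))]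
        ring
  intro x
  set M : Matrix (Fin (n + 2)) (Fin (n + 2)) ℝ :=
    Matrix.of fun a b => iteratedDeriv a.1 ((Fin.snoc h ψ : Fin (n + 2) → ℝ → ℝ) b) x with hM
  set c : Fin (n + 2) → ℝ := Fin.snoc (fun i : Fin (n + 1) => g i x) 0 with hc
  have hcol : (fun a : Fin (n + 2) => M a (Fin.last (n + 1))) =
      (fun a : Fin (n + 2) => ∑ k : Fin (n + 2), c k • M a k)
        + fun a => if a = Fin.last (n + 1) then φ x else 0 := by
    funext a
    have h1 : M a (Fin.last (n + 1)) = iteratedDeriv a.1 ψ x := by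
      simp [hM]
    have h2 : ∑ k : Fin (n + 2), c k • M a k
        = ∑ i : Fin (n + 1), g i x * iteratedDeriv a.1 (h i) x := by
      rw [Fin.sum_univ_castSucc]
      simp [hc, hM]
    have h3 : (if a = Fin.last (n + 1) then φ x else 0)
        = (if a.1 = n + 1 then φ x else 0) := by
      congr 1
      simp [Fin.ext_iff]
    rw [Pi.add_apply, h1, h2, h3, key2 a.1 (by omega) x]
  have hMain : Wr1 (Fin.snoc h ψ) x = φ x * Wr1 h x := by
    have h1 : Wr1 (Fin.snoc h ψ) x = M.det := rfl
    have h2 : M = M.updateCol (Fin.last (n + 1))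
        ((fun a : Fin (n + 2) => ∑ k : Fin (n + 2), c k • M a k)
          + fun a => if a = Fin.last (n + 1) then φ x else 0) := by
      conv_lhs => rw [← M.updateCol_eq_self (Fin.last (n + 1))]
      exact congrArg _ hcol
    rw [h1, h2, Matrix.det_updateCol_add]
    have h3 : (M.updateCol (Fin.last (n + 1))
        fun a : Fin (n + 2) => ∑ k : Fin (n + 2), c k • M a k).det = 0 := by
      rw [Matrix.det_updateCol_sum]
      simp [hc]
    have h4 : (M.updateCol (Fin.last (n + 1))
        (fun a => if a = Fin.last (n + 1) then φ x else 0)).det = φ x * Wr1 h x := by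
      rw [Matrix.det_succ_column _ (Fin.last (n + 1))]
      rw [Finset.sum_eq_single (Fin.last (n + 1))]
      · have hminor : ((M.updateCol (Fin.last (n + 1))
            (fun a => if a = Fin.last (n + 1) then φ x else 0)).submatrix
              (Fin.last (n + 1)).succAbove (Fin.last (n + 1)).succAbove).det
            = Wr1 h x := by
          unfold Wr1
          congr 1
          ext a b
          simp [hM, Fin.succAbove_last, Matrix.updateCol_ne
            (Fin.ne_of_lt (Fin.castSucc_lt_last b))]
        rw [hminor]
        have hsign : (-1 : ℝ) ^ ((Fin.last (n + 1) : Fin (n + 2)).1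
            + (Fin.last (n + 1) : Fin (n + 2)).1) = 1 := by
          simp [Fin.val_last, ← two_mul, pow_mul]
        simp only [Matrix.updateCol_self, if_pos rfl]
        rw [hsign, if_pos trivial]
        ring
      · intro a _ ha
        simp [Matrix.updateCol_self, ha]
      · intro habs
        exact absurd (Finset.mem_univ _) habs
    rw [h3, h4, zero_add]
  show Wr1 (Fin.snoc h ψ) x / Wr1 h x = φ x
  rw [hMain, mul_div_cancel_right₀ _ (hW x)]
end

section
/- (Concrete form of the Oevel–Strampp inversion lemma, left-inverse half.) For every smooth φ : ℝ → ℝ and every x₀ ∈ ℝ there exist constants a_1,…,a_N ∈ ℝ such that φ(x) = Σ_{i=1}^N a_i h_i(x) + Σ_{i=1}^N h_i(x)·∫_{x₀}^{x} r_i(s)·W(φ)(s) ds for all x ∈ ℝ. -/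
private lemma continuous_det_aux {m : ℕ} (A : Fin m → Fin m → ℝ → ℝ)
    (hA : ∀ a b, Continuous (A a b)) :
    Continuous fun x => (Matrix.of fun a b => A a b x).det := by
  simp only [Matrix.det_apply', Matrix.of_apply]
  exact continuous_finset_sum _ fun σ _ =>
    continuous_const.mul (continuous_finset_prod _ fun i _ => hA (σ i) i)

private lemma differentiable_det_aux {m : ℕ} (A : Fin m → Fin m → ℝ → ℝ)
    (hA : ∀ a b, Differentiable ℝ (A a b)) :
    Differentiable ℝ fun x => (Matrix.of fun a b => A a b x).det := by
  simp only [Matrix.det_apply', Matrix.of_apply]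
  refine Differentiable.fun_sum fun σ _ => Differentiable.const_mul (fun x => ?_) _
  exact (HasDerivAt.fun_finsetProd fun i _ => (hA (σ i) i x).hasDerivAt).differentiableAt

private lemma det_updateColumn_last_single {m : ℕ} (B : Matrix (Fin (m+1)) (Fin (m+1)) ℝ) :
    (B.updateCol (Fin.last m) (Pi.single (Fin.last m) 1)).det
      = (B.submatrix Fin.castSucc Fin.castSucc).det := by
  rw [Matrix.det_succ_column _ (Fin.last m)]
  rw [Finset.sum_eq_single (Fin.last m)]
  · have h1 : ((-1 : ℝ)) ^ ((Fin.last m).1 + (Fin.last m).1) = 1 := by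
      rw [← two_mul, pow_mul]; norm_num
    rw [Matrix.updateCol_apply, if_pos rfl, Pi.single_eq_same, h1, mul_one, one_mul]
    congr 1
    ext a b
    simp [Matrix.updateCol_apply, Fin.succAbove_last, (Fin.castSucc_lt_last b).ne]
  · intro i _ hi
    rw [Matrix.updateCol_apply, if_pos rfl, Pi.single_eq_of_ne hi]
    ring
  · simp

private lemma continuous_wr1 {m : ℕ} (p : Fin m → ℝ → ℝ) (hp : ∀ b, ContDiff ℝ (⊤ : ℕ∞) (p b)) :
    Continuous (Wr1 p) :=
  continuous_det_aux _ fun a b => (hp b).continuous_iteratedDeriv a.1 (by exact_mod_cast le_top)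

/-- Oevel–Strampp inversion, left-inverse half: for any smooth φ and
any basepoint x₀ there are constants a₁,…,a_N with
`φ = Σ_i a_i h_i + Σ_i h_i·∫_{x₀}^{·} r_i·W(φ)`. -/
theorem oevel_strampp_left_inverse (n : ℕ) (h : Fin (n + 1) → ℝ → ℝ)
    (hsm : ∀ i, ContDiff ℝ (⊤ : ℕ∞) (h i))
    (hW : ∀ x, Wr1 h x ≠ 0)
    (r : Fin (n + 1) → ℝ → ℝ)
    (hr : ∀ i, r i = fun x => (-1 : ℝ) ^ (n - i.1) *
      (Wr1 (fun j => h (i.succAbove j)) x / Wr1 h x))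
    (φ : ℝ → ℝ) (hφ : ContDiff ℝ (⊤ : ℕ∞) φ) (x₀ : ℝ) :
    ∃ a : Fin (n + 1) → ℝ, ∀ x : ℝ,
      φ x = ∑ i, a i * h i x + ∑ i, h i x * ∫ s in x₀..x, r i s * Wop h φ s := by
  classical
  -- abbreviations
  set g : Fin (n+1) → ℝ → ℝ := fun i x => ∫ s in x₀..x, r i s * Wop h φ s with hgdef
  set u : ℕ → ℝ → ℝ := fun k x => ∑ i, iteratedDeriv k (h i) x * g i x with hudef
  set F : ℝ → ℝ := fun x => φ x - u 0 x with hFdef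
  -- continuity facts
  have hWr_cont : Continuous (Wr1 h) := continuous_wr1 h hsm
  have hsnoc_sm : ∀ b : Fin (n+2), ContDiff ℝ (⊤ : ℕ∞) ((Fin.snoc h φ : Fin (n+2) → ℝ → ℝ) b) := by
    intro b
    rcases Fin.eq_castSucc_or_eq_last b with ⟨i, rfl⟩ | rfl
    · simpa using hsm i
    · simpa using hφ
  have hWφ_cont : Continuous (Wop h φ) :=
    (continuous_wr1 _ hsnoc_sm).div hWr_cont hW
  have hr_cont : ∀ i, Continuous (r i) := by
    intro i
    rw [hr i]
    exact continuous_const.mul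
      (((continuous_wr1 _ fun j => hsm _)).div hWr_cont hW)
  have hg : ∀ i x, HasDerivAt (g i) (r i x * Wop h φ x) x := fun i x =>
    (((hr_cont i).mul hWφ_cont).integral_hasStrictDerivAt x₀ x).hasDerivAt
  -- derivative steps for iterated derivatives of smooth functions
  have hder : ∀ (f : ℝ → ℝ), ContDiff ℝ (⊤ : ℕ∞) f → ∀ (k : ℕ) (x : ℝ),
      HasDerivAt (iteratedDeriv k f) (iteratedDeriv (k+1) f x) x := by
    intro f hf k x
    have hd : Differentiable ℝ (iteratedDeriv k f) :=
      hf.differentiable_iteratedDeriv k (by exact_mod_cast ENat.coe_lt_top k)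
    rw [iteratedDeriv_succ]
    exact (hd x).hasDerivAt
  -- KEY 1 : Cramer identity  ∑ h_i^{(k)} r_i = δ_{k,n}
  have key1 : ∀ (x : ℝ) (k : ℕ), k ≤ n →
      ∑ i, iteratedDeriv k (h i) x * r i x = if k = n then 1 else 0 := by
    intro x k hk
    set M : Matrix (Fin (n+1)) (Fin (n+1)) ℝ :=
      Matrix.of fun a b => iteratedDeriv (if a = Fin.last n then k else a.1) (h b) x with hMdef
    have hdetM : M.det = if k = n then Wr1 h x else 0 := by
      by_cases hkn : k = n
      · rw [if_pos hkn]
        have : M = Matrix.of fun a b : Fin (n+1) => iteratedDeriv a.1 (h b) x := by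
          ext a b
          by_cases ha : a = Fin.last n
          · subst ha; simp [hMdef, hkn]
          · simp [hMdef, ha]
        rw [this]; rfl
      · rw [if_neg hkn]
        have hklt : k < n := lt_of_le_of_ne hk hkn
        refine Matrix.det_zero_of_row_eq (i := (⟨k, by omega⟩ : Fin (n+1)))
          (j := Fin.last n) ?_ ?_
        · intro hcon
          apply hkn
          simpa [Fin.ext_iff, Fin.last] using hcon
        · funext b
          simp [hMdef, Fin.last, Fin.ext_iff]
    have hexp : M.det = ∑ i : Fin (n+1),
        (-1 : ℝ) ^ (n - i.1) * (iteratedDeriv k (h i) x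
          * Wr1 (fun j => h (i.succAbove j)) x) := by
      rw [Matrix.det_succ_row M (Fin.last n)]
      refine Finset.sum_congr rfl fun i _ => ?_
      have hsub : M.submatrix (Fin.last n).succAbove i.succAbove
          = Matrix.of fun a b : Fin n =>
              iteratedDeriv a.1 ((fun j => h (i.succAbove j)) b) x := by
        ext a b
        simp [hMdef, Fin.succAbove_last, (Fin.castSucc_lt_last a).ne]
      have hsign : ((-1 : ℝ)) ^ ((Fin.last n).1 + i.1) = (-1) ^ (n - i.1) := by
        have h2 : (Fin.last n).1 + i.1 = (n - i.1) + 2 * i.1 := by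
          simp [Fin.last]; omega
        rw [h2, pow_add, pow_mul]; norm_num
      have hMe : M (Fin.last n) i = iteratedDeriv k (h i) x := by simp [hMdef]
      rw [hsub, hsign, hMe]
      unfold Wr1
      ring
    have hsum : (∑ i, iteratedDeriv k (h i) x * r i x) * Wr1 h x = M.det := by
      rw [hexp, Finset.sum_mul]
      refine Finset.sum_congr rfl fun i _ => ?_
      rw [hr i]
      field_simp [hW x]
    rw [hdetM] at hsum
    have h2 : (∑ i, iteratedDeriv k (h i) x * r i x) * Wr1 h x
        = (if k = n then 1 else 0) * Wr1 h x := by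
      rw [hsum]; by_cases hkn : k = n <;> simp [hkn]
    exact mul_right_cancel₀ (hW x) h2
  -- derivative of u k
  have hu' : ∀ (k : ℕ), k ≤ n → ∀ x, HasDerivAt (u k)
      (u (k+1) x + (if k = n then 1 else 0) * Wop h φ x) x := by
    intro k hk x
    have hsum : HasDerivAt (fun y => ∑ i, iteratedDeriv k (h i) y * g i y)
        (∑ i, (iteratedDeriv (k+1) (h i) x * g i x
          + iteratedDeriv k (h i) x * (r i x * Wop h φ x))) x :=
      HasDerivAt.fun_sum fun i _ => (hder (h i) (hsm i) k x).mul (hg i x)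
    have hval : (∑ i, (iteratedDeriv (k+1) (h i) x * g i x
          + iteratedDeriv k (h i) x * (r i x * Wop h φ x)))
        = u (k+1) x + (if k = n then 1 else 0) * Wop h φ x := by
      rw [Finset.sum_add_distrib]
      congr 1
      rw [← key1 x k hk, Finset.sum_mul]
      exact Finset.sum_congr rfl fun i _ => by ring
    exact hval ▸ hsum
  -- iterated derivatives of F
  have hFit : ∀ k : ℕ, k ≤ n+1 → ∀ x, iteratedDeriv k F x
      = iteratedDeriv k φ x - u k x - (if k = n+1 then Wop h φ x else 0) := by
    intro k
    induction k with
    | zero =>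
      intro _ x
      simp [hFdef]
    | succ k ih =>
      intro hk x
      have hk' : k ≤ n := by omega
      have hfun : iteratedDeriv k F = fun y => iteratedDeriv k φ y - u k y := by
        funext y
        rw [ih (by omega) y]
        simp [show k ≠ n+1 by omega]
      rw [iteratedDeriv_succ, hfun]
      have hd : HasDerivAt (fun y => iteratedDeriv k φ y - u k y)
          (iteratedDeriv (k+1) φ x - (u (k+1) x + (if k = n then 1 else 0) * Wop h φ x)) x :=
        (hder φ hφ k x).sub (hu' k hk' x)
      rw [hd.deriv]
      by_cases hkn : k = n <;> simp [hkn] <;> ring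
  -- HasDerivAt for iterated derivatives of F
  have hFder : ∀ k : ℕ, k ≤ n → ∀ x, HasDerivAt (iteratedDeriv k F)
      (iteratedDeriv (k+1) F x) x := by
    intro k hk x
    have hfun : iteratedDeriv k F = fun y => iteratedDeriv k φ y - u k y := by
      funext y
      rw [hFit k (by omega) y]
      simp [show k ≠ n+1 by omega]
    rw [hfun]
    have hd : HasDerivAt (fun y => iteratedDeriv k φ y - u k y)
        (iteratedDeriv (k+1) φ x - (u (k+1) x + (if k = n then 1 else 0) * Wop h φ x)) x :=
      (hder φ hφ k x).sub (hu' k hk x)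
    have hval : iteratedDeriv (k+1) F x
        = iteratedDeriv (k+1) φ x - (u (k+1) x + (if k = n then 1 else 0) * Wop h φ x) := by
      rw [hFit (k+1) (by omega) x]
      by_cases hkn : k = n <;> simp [hkn] <;> ring
    exact hval ▸ hd
  -- the big (n+2)×(n+2) matrix with φ in the last column
  set B : ℝ → Matrix (Fin (n+2)) (Fin (n+2)) ℝ := fun x =>
    Matrix.of fun a b => iteratedDeriv a.1 ((Fin.snoc h φ : Fin (n+2) → ℝ → ℝ) b) x with hBdef
  have hBdet : ∀ x, (B x).det = Wr1 (Fin.snoc h φ) x := fun x => rfl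
  have hsubm : ∀ x, ((B x).submatrix Fin.castSucc Fin.castSucc).det = Wr1 h x := by
    intro x
    unfold Wr1
    congr 1
    ext a b
    simp [hBdef]
  -- W(F) = 0, expressed via the Wronskian
  have hWF : ∀ x, Wr1 (Fin.snoc h F) x = 0 := by
    intro x
    have hBF : (Matrix.of fun a b : Fin (n+2) =>
        iteratedDeriv a.1 ((Fin.snoc h F : Fin (n+2) → ℝ → ℝ) b) x)
        = (B x).updateCol (Fin.last (n+1)) (fun a => iteratedDeriv a.1 F x) := by
      ext a b
      rcases Fin.eq_castSucc_or_eq_last b with ⟨i, rfl⟩ | rfl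
      · simp [hBdef, Matrix.updateCol_apply, (Fin.castSucc_lt_last i).ne]
      · simp [hBdef, Matrix.updateCol_apply]
    have hcol : (fun a : Fin (n+2) => iteratedDeriv a.1 F x)
        = (fun a : Fin (n+2) => B x a (Fin.last (n+1)))
          + ((fun a => ∑ j, (Fin.snoc (fun i => -(g i x)) 0 : Fin (n+2) → ℝ) j • B x a j)
            + (-(Wop h φ x)) • (Pi.single (Fin.last (n+1)) (1:ℝ) : Fin (n+2) → ℝ)) := by
      funext a
      have ha : a.1 ≤ n + 1 := by omega
      rw [hFit a.1 ha x]
      simp only [Pi.add_apply, Pi.smul_apply, smul_eq_mul, hBdef, Matrix.of_apply,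
        Fin.snoc_last, Pi.single_apply, hudef]
      have hsum2 : ∑ j : Fin (n+2), (Fin.snoc (fun i => -(g i x)) 0 : Fin (n+2) → ℝ) j *
          iteratedDeriv a.1 ((Fin.snoc h φ : Fin (n+2) → ℝ → ℝ) j) x
          = -(∑ i : Fin (n+1), iteratedDeriv a.1 (h i) x * g i x) := by
        rw [Fin.sum_univ_castSucc]
        simp only [Fin.snoc_castSucc, Fin.snoc_last, zero_mul, add_zero]
        rw [← Finset.sum_neg_distrib]
        exact Finset.sum_congr rfl fun i _ => by ring
      rw [hsum2]
      by_cases hal : a = Fin.last (n+1)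
      · subst hal
        simp only [Fin.val_last, eq_self_iff_true, if_true]
        ring
      · have h1 : a.1 ≠ n + 1 := fun hcon => hal (Fin.ext (by simp [hcon]))
        simp only [if_neg hal, if_neg h1]
        ring
    have : Wr1 (Fin.snoc h F) x
        = ((B x).updateCol (Fin.last (n+1)) (fun a => iteratedDeriv a.1 F x)).det := by
      unfold Wr1
      rw [hBF]
    rw [this, hcol, Matrix.det_updateCol_add, Matrix.det_updateCol_add,
      Matrix.det_updateCol_smul, Matrix.det_updateCol_sum,
      det_updateColumn_last_single, Matrix.updateCol_eq_self, hsubm, hBdet]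
    simp only [Fin.snoc_last, zero_smul, smul_eq_mul]
    have hWx := hW x
    unfold Wop
    field_simp
    ring
  -- the (n+1)×(n+1) Wronskian matrix and the Cramer coefficients
  set Amat : ℝ → Matrix (Fin (n+1)) (Fin (n+1)) ℝ := fun x =>
    Matrix.of fun k j => iteratedDeriv k.1 (h j) x with hAdef
  have hAdet : ∀ x, (Amat x).det = Wr1 h x := fun x => rfl
  set cF : ℝ → Fin (n+1) → ℝ := fun x k => iteratedDeriv k.1 F x with hcFdef
  set lam : Fin (n+1) → ℝ → ℝ := fun i x =>
    Matrix.cramer (Amat x) (cF x) i / Wr1 h x with hlamdef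
  have key7a : ∀ (x : ℝ) (k : Fin (n+1)),
      iteratedDeriv k.1 F x = ∑ i, lam i x * iteratedDeriv k.1 (h i) x := by
    intro x k
    have hmv := congrFun (Matrix.mulVec_cramer (Amat x) (cF x)) k
    simp only [Matrix.mulVec, dotProduct, Pi.smul_apply, smul_eq_mul] at hmv
    have hWx := hW x
    rw [eq_comm]
    calc ∑ i, lam i x * iteratedDeriv k.1 (h i) x
        = (∑ i, Amat x k i * Matrix.cramer (Amat x) (cF x) i) / Wr1 h x := by
          rw [Finset.sum_div]
          refine Finset.sum_congr rfl fun i _ => ?_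
          simp only [hlamdef, hAdef, Matrix.of_apply]
          ring
      _ = ((Amat x).det * cF x k) / Wr1 h x := by rw [hmv]
      _ = iteratedDeriv k.1 F x := by
          rw [hAdet]
          field_simp [hcFdef]
          rfl
  have key7b : ∀ x : ℝ,
      iteratedDeriv (n+1) F x = ∑ i, lam i x * iteratedDeriv (n+1) (h i) x := by
    intro x
    set BF : Matrix (Fin (n+2)) (Fin (n+2)) ℝ :=
      Matrix.of fun a b => iteratedDeriv a.1 ((Fin.snoc h F : Fin (n+2) → ℝ → ℝ) b) x with hBFdef
    have hBF0 : BF.det = 0 := hWF x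
    set c : ℝ := iteratedDeriv (n+1) F x - ∑ i, lam i x * iteratedDeriv (n+1) (h i) x with hcdef
    have hcol : (fun a : Fin (n+2) => BF a (Fin.last (n+1)))
        = (fun a => ∑ j, (Fin.snoc (fun i => lam i x) 0 : Fin (n+2) → ℝ) j • BF a j)
          + c • (Pi.single (Fin.last (n+1)) (1:ℝ) : Fin (n+2) → ℝ) := by
      funext a
      simp only [Pi.add_apply, Pi.smul_apply, smul_eq_mul, hBFdef, Matrix.of_apply,
        Fin.snoc_last, Pi.single_apply]
      have hs : ∑ j : Fin (n+2), (Fin.snoc (fun i => lam i x) 0 : Fin (n+2) → ℝ) j *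
          iteratedDeriv a.1 ((Fin.snoc h F : Fin (n+2) → ℝ → ℝ) j) x
          = ∑ i : Fin (n+1), lam i x * iteratedDeriv a.1 (h i) x := by
        rw [Fin.sum_univ_castSucc]
        simp [Fin.snoc_castSucc, Fin.snoc_last]
      rw [hs]
      by_cases hal : a = Fin.last (n+1)
      · subst hal
        simp only [Fin.val_last, eq_self_iff_true, if_true, hcdef]
        ring
      · have h1 : a.1 ≠ n+1 := fun hcon => hal (Fin.ext (by simp [hcon]))
        have h2 : a.1 ≤ n := by have := a.2; omega
        rw [if_neg hal, mul_zero, add_zero]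
        exact key7a x ⟨a.1, by omega⟩
    have hself : BF.det = (BF.updateCol (Fin.last (n+1))
        (fun a => BF a (Fin.last (n+1)))).det := by
      rw [Matrix.updateCol_eq_self]
    rw [hself, hcol, Matrix.det_updateCol_add, Matrix.det_updateCol_sum,
      Matrix.det_updateCol_smul, det_updateColumn_last_single] at hBF0
    have hsub : (BF.submatrix Fin.castSucc Fin.castSucc).det = Wr1 h x := by
      unfold Wr1
      congr 1
      ext a b
      simp [hBFdef]
    rw [hsub] at hBF0
    simp only [Fin.snoc_last, zero_smul, smul_eq_mul, zero_mul, zero_add] at hBF0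
    have hc0 : c = 0 := by
      rcases mul_eq_zero.mp hBF0 with hc | hWc
      · exact hc
      · exact absurd hWc (hW x)
    rw [hcdef] at hc0
    linarith [hc0]
  -- differentiability of the lam's
  have hWr_diff : Differentiable ℝ (Wr1 h) := by
    unfold Wr1
    exact differentiable_det_aux (fun a b x => iteratedDeriv a.1 (h b) x)
      (fun a b => (hsm b).differentiable_iteratedDeriv a.1 (by exact_mod_cast ENat.coe_lt_top a.1))
  have hlam_diff : ∀ i, Differentiable ℝ (lam i) := by
    intro i
    have hnum : Differentiable ℝ (fun x => Matrix.cramer (Amat x) (cF x) i) := by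
      have heq : (fun x => Matrix.cramer (Amat x) (cF x) i)
          = fun x => (Matrix.of fun a b : Fin (n+1) =>
              (fun a b x => if b = i then iteratedDeriv a.1 F x
                else iteratedDeriv a.1 (h b) x) a b x).det := by
        funext x
        rw [Matrix.cramer_apply]
        congr 1
        ext a b
        by_cases hbi : b = i <;> simp [Matrix.updateCol_apply, hbi, hAdef, hcFdef]
      rw [heq]
      refine differentiable_det_aux _ (fun a b => ?_)
      by_cases hbi : b = i
      · simp only [hbi, if_pos rfl]
        exact fun x => (hFder a.1 (Nat.lt_succ_iff.mp a.2) x).differentiableAt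
      · simp only [if_neg hbi]
        exact (hsm b).differentiable_iteratedDeriv a.1 (by exact_mod_cast ENat.coe_lt_top a.1)
    exact hnum.div hWr_diff hW
  -- derivative of lam is zero
  have hlam0 : ∀ i x, deriv (lam i) x = 0 := by
    intro i₀ x
    set d : Fin (n+1) → ℝ := fun i => deriv (lam i) x with hddef
    have hsys : ∀ k : Fin (n+1), ∑ i, d i * iteratedDeriv k.1 (h i) x = 0 := by
      intro k
      have hfun : (fun y => iteratedDeriv k.1 F y)
          = fun y => ∑ i, lam i y * iteratedDeriv k.1 (h i) y :=
        funext fun y => key7a y k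
      have hd1 : HasDerivAt (fun y => ∑ i, lam i y * iteratedDeriv k.1 (h i) y)
          (∑ i, (d i * iteratedDeriv k.1 (h i) x + lam i x * iteratedDeriv (k.1+1) (h i) x)) x :=
        HasDerivAt.fun_sum fun i _ =>
          ((hlam_diff i x).hasDerivAt.mul (hder (h i) (hsm i) k.1 x))
      have hd2 : HasDerivAt (fun y => iteratedDeriv k.1 F y) (iteratedDeriv (k.1+1) F x) x :=
        hFder k.1 (Nat.lt_succ_iff.mp k.2) x
      rw [hfun] at hd2
      have huniq := hd2.unique hd1
      have hnext : iteratedDeriv (k.1+1) F x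
          = ∑ i, lam i x * iteratedDeriv (k.1+1) (h i) x := by
        by_cases hkn : k.1 = n
        · rw [hkn]; exact key7b x
        · have : k.1 + 1 ≤ n := by have := k.2; omega
          exact key7a x ⟨k.1+1, by omega⟩
      rw [hnext, Finset.sum_add_distrib] at huniq
      linarith [huniq]
    have hmv : (Amat x).mulVec d = 0 := by
      funext k
      have := hsys k
      simp only [Matrix.mulVec, dotProduct, hAdef, Matrix.of_apply, Pi.zero_apply]
      rw [← this]
      exact Finset.sum_congr rfl fun i _ => by ring
    have hd0 : d = 0 := Matrix.eq_zero_of_mulVec_eq_zero (by rw [hAdet]; exact hW x) hmv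
    have := congrFun hd0 i₀
    simpa [hddef] using this
  -- lam is constant, conclude
  have hconst : ∀ i y, lam i y = lam i x₀ :=
    fun i y => is_const_of_deriv_eq_zero (hlam_diff i) (hlam0 i) y x₀
  refine ⟨fun i => lam i x₀, fun x => ?_⟩
  have h0 : F x = ∑ i, lam i x * h i x := by
    simpa using key7a x ⟨0, by omega⟩
  have h0' : F x = ∑ i, lam i x₀ * h i x := by
    rw [h0]
    exact Finset.sum_congr rfl fun i _ => by rw [hconst i x]
  have hu0 : u 0 x = ∑ i, h i x * g i x := by
    simp [hudef, mul_comm]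
  have hF0 : F x = φ x - u 0 x := rfl
  show φ x = ∑ i, lam i x₀ * h i x + ∑ i, h i x * g i x
  rw [← hu0, ← h0']
  rw [hF0]
  ring
end

section
/- (Concrete form of the lemma that ∂^{-1} r_i W is a non-negative differential operator with (∂^{-1} r_i W)(h_j) = δ_{ij}.) For each i ∈ {1,…,N} there exist smooth functions c_{i,0},…,c_{i,N−1} : ℝ → ℝ such that, setting D_i(φ) = Σ_{m=0}^{N−1} c_{i,m}·∂^m φ, one has (D_i(φ))' = r_i·W(φ) for every smooth φ : ℝ → ℝ, and D_i(h_j) is the constant function δ_{ij} (1 if i = j, 0 otherwise) for every j ∈ {1,…,N}. -/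
open Matrix Finset

lemma contDiff_top_deriv {f : ℝ → ℝ} (hf : ContDiff ℝ (⊤ : ℕ∞) f) : ContDiff ℝ (⊤ : ℕ∞) (deriv f) :=
  ContDiff.iterate_deriv 1 hf

lemma contDiff_top_iteratedDeriv (m : ℕ) {f : ℝ → ℝ} (hf : ContDiff ℝ (⊤ : ℕ∞) f) :
    ContDiff ℝ (⊤ : ℕ∞) (iteratedDeriv m f) := by
  induction m with
  | zero => simpa using hf
  | succ k ih => rw [iteratedDeriv_succ]; exact contDiff_top_deriv ih

lemma hasDerivAt_iteratedDeriv (m : ℕ) {f : ℝ → ℝ} (hf : ContDiff ℝ (⊤ : ℕ∞) f) (x : ℝ) :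
    HasDerivAt (iteratedDeriv m f) (iteratedDeriv (m + 1) f x) x := by
  rw [iteratedDeriv_succ]
  exact (((contDiff_top_iteratedDeriv m hf).differentiable (by simp)) x).hasDerivAt

lemma contDiff_det {k : ℕ} (A : Fin k → Fin k → ℝ → ℝ) (hA : ∀ a b, ContDiff ℝ (⊤ : ℕ∞) (A a b)) :
    ContDiff ℝ (⊤ : ℕ∞) (fun x => (Matrix.of fun a b => A a b x).det) := by
  have hfun : (fun x => (Matrix.of fun a b => A a b x).det)
      = fun x => ∑ σ : Equiv.Perm (Fin k),
          ((Equiv.Perm.sign σ : ℤ) : ℝ) * ∏ a, A (σ a) a x := by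
    funext x
    rw [Matrix.det_apply']
    rfl
  rw [hfun]
  exact ContDiff.sum fun σ _ => contDiff_const.mul (contDiff_prod fun a _ => hA (σ a) a)


lemma hasDerivAt_det_col {k : ℕ} (A A' : Fin k → Fin k → ℝ → ℝ) (x : ℝ)
    (hA : ∀ a b, HasDerivAt (A a b) (A' a b x) x) :
    HasDerivAt (fun t => (Matrix.of fun a b => A a b t).det)
      (∑ b0 : Fin k,
        (Matrix.of fun a b => if b = b0 then A' a b x else A a b x).det) x := by
  have hfun : (fun t => (Matrix.of fun a b => A a b t).det)
      = fun t => ∑ σ : Equiv.Perm (Fin k),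
          ((Equiv.Perm.sign σ : ℤ) : ℝ) * ∏ a, A (σ a) a t := by
    funext t; rw [Matrix.det_apply']; rfl
  have hder : (∑ b0 : Fin k,
        (Matrix.of fun a b => if b = b0 then A' a b x else A a b x).det)
      = ∑ σ : Equiv.Perm (Fin k), ((Equiv.Perm.sign σ : ℤ) : ℝ) *
          ∑ b0 : Fin k, (∏ b ∈ Finset.univ.erase b0, A (σ b) b x) • A' (σ b0) b0 x := by
    simp only [Matrix.det_apply', Matrix.of_apply]
    rw [Finset.sum_comm]
    refine Finset.sum_congr rfl fun σ _ => ?_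
    rw [Finset.mul_sum]
    refine Finset.sum_congr rfl fun b0 _ => ?_
    congr 1
    rw [← Finset.mul_prod_erase (Finset.univ) _ (Finset.mem_univ b0)]
    simp only [Matrix.of_apply, if_pos rfl, smul_eq_mul]
    rw [mul_comm]
    congr 1
    refine Finset.prod_congr rfl fun b hb => ?_
    rw [if_neg (Finset.ne_of_mem_erase hb)]
  rw [hfun, hder]
  refine HasDerivAt.fun_sum fun σ _ => ?_
  exact (HasDerivAt.fun_finsetProd fun b _ => hA (σ b) b).const_mul _

/-- bumped Wronskian: last row replaced by (k+1)-st derivatives -/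
noncomputable def WrB {k : ℕ} (g : Fin (k+1) → ℝ → ℝ) : ℝ → ℝ := fun x =>
  (Matrix.of fun a b : Fin (k+1) =>
    iteratedDeriv (if a.1 = k then k + 1 else a.1) (g b) x).det

lemma hasDerivAt_wr {k : ℕ} (g : Fin (k+1) → ℝ → ℝ) (hg : ∀ b, ContDiff ℝ (⊤ : ℕ∞) (g b)) (x : ℝ) :
    HasDerivAt (Wr1 g) (WrB g x) x := by
  have hfun : Wr1 g = fun t =>
      (Matrix.of fun a b : Fin (k+1) => iteratedDeriv b.1 (g a) t).det := by
    funext t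
    rw [Wr1, ← Matrix.det_transpose]
    rfl
  have key := hasDerivAt_det_col (fun a b t => iteratedDeriv b.1 (g a) t)
    (fun a b t => iteratedDeriv (b.1 + 1) (g a) t) x
    (fun a b => hasDerivAt_iteratedDeriv b.1 (hg a) x)
  rw [hfun]
  convert key using 1
  rw [Finset.sum_eq_single (Fin.last k)]
  · rw [WrB, ← Matrix.det_transpose]
    congr 1
    ext a b
    simp only [Matrix.transpose_apply, Matrix.of_apply]
    by_cases hb : b = Fin.last k
    · subst hb
      simp
    · have hbk : ¬ (b.1 = k) := fun h => hb (Fin.ext (by simpa using h))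
      rw [if_neg hb, if_neg hbk]
  · intro b0 _ hb0
    have hlt : b0.1 < k := lt_of_le_of_ne (Nat.lt_succ_iff.mp b0.isLt) (fun h => hb0 (Fin.ext h))
    refine Matrix.det_zero_of_column_eq (i := ⟨b0.1 + 1, by omega⟩) (j := b0) ?_ fun a => ?_
    · exact fun h => by simpa using congrArg Fin.val h
    · have h1 : (⟨b0.1 + 1, by omega⟩ : Fin (k+1)) ≠ b0 := fun h => by
        simpa using congrArg Fin.val h
      simp [h1]
  · simp


def rho (n : ℕ) : Fin (n+1) → Fin (n+2) :=
  fun a => if a.1 = n then Fin.last (n+1) else a.castSucc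

lemma rho_castSucc {n : ℕ} (j : Fin n) : rho n j.castSucc = j.castSucc.castSucc := by
  have : (j.castSucc : Fin (n+1)).1 ≠ n := by have := j.isLt; simp; omega
  rw [rho, if_neg this]

lemma rho_last {n : ℕ} : rho n (Fin.last n) = Fin.last (n+1) := by simp [rho]

lemma rho_of_ne_last {n : ℕ} {a : Fin (n+1)} (ha : a ≠ Fin.last n) :
    rho n a = a.castSucc := by
  rw [rho, if_neg (fun h => ha (Fin.ext (by simpa using h)))]

lemma det_snoc_single {k : ℕ} (w : Fin k → Fin (k+1) → ℝ) :
    (Matrix.of (Fin.snoc w (Pi.single (Fin.last k) 1) : Fin (k+1) → Fin (k+1) → ℝ)).det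
      = (Matrix.of fun a b : Fin k => w a b.castSucc).det := by
  rw [Matrix.det_succ_row _ (Fin.last k), Finset.sum_eq_single (Fin.last k)]
  · simp only [Matrix.of_apply, Fin.snoc_last, Pi.single_eq_same, Fin.val_last,
      Fin.succAbove_last, mul_one]
    rw [Even.neg_one_pow ⟨k, rfl⟩, one_mul]
    congr 1
    ext a b
    simp [Fin.snoc_castSucc]
  · intro j _ hj
    simp [Fin.snoc_last, Pi.single_eq_of_ne hj]
  · simp

def tauPerm {n : ℕ} (i : Fin (n+1)) : Equiv.Perm (Fin (n+1)) :=
  (Fin.cycleRange i)⁻¹ * finRotate (n+1)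

lemma tauPerm_apply {n : ℕ} (i : Fin (n+1)) (t : Fin (n+1)) :
    tauPerm i t = (Fin.snoc (Fin.succAbove i) i : Fin (n+1) → Fin (n+1)) t := by
  refine Fin.lastCases ?_ (fun k => ?_) t
  · rw [Fin.snoc_last, tauPerm, Equiv.Perm.mul_apply, finRotate_succ_apply, Fin.last_add_one,
      Equiv.Perm.inv_def, Fin.cycleRange_symm_zero]
  · rw [Fin.snoc_castSucc, tauPerm, Equiv.Perm.mul_apply, finRotate_succ_apply,
      Fin.coeSucc_eq_succ, Equiv.Perm.inv_def, Fin.cycleRange_symm_succ]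

lemma tauPerm_sign {n : ℕ} (i : Fin (n+1)) :
    ((Equiv.Perm.sign (tauPerm i) : ℤ) : ℝ) = (-1 : ℝ) ^ (n + i.1) := by
  have h : Equiv.Perm.sign (tauPerm i) = (-1) ^ (n + i.1) := by
    rw [tauPerm, _root_.map_mul, Equiv.Perm.sign_inv, Fin.sign_cycleRange, sign_finRotate,
      ← pow_add, add_comm]
    rw [Nat.add_sub_cancel]
  rw [h]
  push_cast
  ring

lemma core_identity (n : ℕ) (i : Fin (n+1)) (v : Fin (n+1) → Fin (n+2) → ℝ)
    (p : Fin (n+2) → ℝ)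
    (hV : (Matrix.of fun j a : Fin (n+1) => v j a.castSucc).det ≠ 0) :
    (Matrix.of (Fin.snoc (fun k a => v (i.succAbove k) (rho n a)) (fun a => p (rho n a)) :
        Fin (n+1) → Fin (n+1) → ℝ)).det
      * (Matrix.of fun j a : Fin (n+1) => v j a.castSucc).det
    - (Matrix.of (Fin.snoc (fun k a => v (i.succAbove k) a.castSucc) (fun a => p a.castSucc) :
        Fin (n+1) → Fin (n+1) → ℝ)).det
      * (Matrix.of fun j a : Fin (n+1) => v j (rho n a)).det
    = (Matrix.of fun k a : Fin n => v (i.succAbove k) a.castSucc.castSucc).det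
      * (Matrix.of (Fin.snoc v p : Fin (n+2) → Fin (n+2) → ℝ)).det := by
  classical
  set dV := (Matrix.of fun j a : Fin (n+1) => v j a.castSucc).det with hdV
  set dV' := (Matrix.of fun j a : Fin (n+1) => v j (rho n a)).det with hdV'
  set dU := (Matrix.of fun k a : Fin n => v (i.succAbove k) a.castSucc.castSucc).det with hdU
  set w1 : Fin n → Fin (n+1) → ℝ := fun k a => v (i.succAbove k) a.castSucc with hw1
  set w2 : Fin n → Fin (n+1) → ℝ := fun k a => v (i.succAbove k) (rho n a) with hw2
  let L1 : (Fin (n+2) → ℝ) →ₗ[ℝ] ℝ :=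
    ((Matrix.detRowAlternating :
        (Fin (n+1) → ℝ) [⋀^Fin (n+1)]→ₗ[ℝ] ℝ).toMultilinearMap.toLinearMap
      (Fin.snoc w1 0) (Fin.last n)).comp (LinearMap.funLeft ℝ ℝ Fin.castSucc)
  let L2 : (Fin (n+2) → ℝ) →ₗ[ℝ] ℝ :=
    ((Matrix.detRowAlternating :
        (Fin (n+1) → ℝ) [⋀^Fin (n+1)]→ₗ[ℝ] ℝ).toMultilinearMap.toLinearMap
      (Fin.snoc w2 0) (Fin.last n)).comp (LinearMap.funLeft ℝ ℝ (rho n))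
  let LM : (Fin (n+2) → ℝ) →ₗ[ℝ] ℝ :=
    (Matrix.detRowAlternating :
        (Fin (n+2) → ℝ) [⋀^Fin (n+2)]→ₗ[ℝ] ℝ).toMultilinearMap.toLinearMap
      (Fin.snoc v 0) (Fin.last (n+1))
  have hL1 : ∀ q : Fin (n+2) → ℝ, L1 q =
      (Matrix.of (Fin.snoc w1 (fun a => q a.castSucc) : Fin (n+1) → Fin (n+1) → ℝ)).det := by
    intro q
    show Matrix.detRowAlternating
      (Function.update (Fin.snoc w1 0) (Fin.last n) (fun a => q a.castSucc)) = _
    rw [Fin.update_snoc_last]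
    rfl
  have hL2 : ∀ q : Fin (n+2) → ℝ, L2 q =
      (Matrix.of (Fin.snoc w2 (fun a => q (rho n a)) : Fin (n+1) → Fin (n+1) → ℝ)).det := by
    intro q
    show Matrix.detRowAlternating
      (Function.update (Fin.snoc w2 0) (Fin.last n) (fun a => q (rho n a))) = _
    rw [Fin.update_snoc_last]
    rfl
  have hLM : ∀ q : Fin (n+2) → ℝ, LM q =
      (Matrix.of (Fin.snoc v q : Fin (n+2) → Fin (n+2) → ℝ)).det := by
    intro q
    show Matrix.detRowAlternating
      (Function.update (Fin.snoc v 0) (Fin.last (n+1)) q) = _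
    rw [Fin.update_snoc_last]
    rfl
  set e : Fin (n+2) → ℝ := Pi.single (Fin.last (n+1)) 1 with he
  -- values at e
  have hL1e : L1 e = 0 := by
    rw [hL1]
    refine Matrix.det_eq_zero_of_row_eq_zero (Fin.last n) fun a => ?_
    show (Fin.snoc w1 (fun a => e a.castSucc) : Fin (n+1) → Fin (n+1) → ℝ) (Fin.last n) a = 0
    rw [Fin.snoc_last, he]
    exact Pi.single_eq_of_ne (Fin.castSucc_lt_last a).ne 1
  have hL2e : L2 e = dU := by
    rw [hL2]
    have hrow : (fun a : Fin (n+1) => e (rho n a)) = Pi.single (Fin.last n) 1 := by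
      funext a
      by_cases ha : a = Fin.last n
      · subst ha
        rw [rho_last, he, Pi.single_eq_same, Pi.single_eq_same]
      · rw [rho_of_ne_last ha, he, Pi.single_eq_of_ne (Fin.castSucc_lt_last a).ne,
          Pi.single_eq_of_ne ha]
    rw [hrow, det_snoc_single]
    rw [hdU]
    congr 1
    ext k a
    show v (i.succAbove k) (rho n a.castSucc) = v (i.succAbove k) a.castSucc.castSucc
    rw [rho_castSucc]
  have hLMe : LM e = dV := by
    rw [hLM, he, det_snoc_single]
  -- the spanning family
  set wfam : Fin (n+2) → Fin (n+2) → ℝ := Fin.snoc v e with hwfam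
  have hBdet : (Matrix.of wfam).det = dV := by
    rw [hwfam, det_snoc_single]
  have hunit : IsUnit (Matrix.of wfam) := by
    rw [Matrix.isUnit_iff_isUnit_det, isUnit_iff_ne_zero, hBdet]
    exact hV
  have hli : LinearIndependent ℝ wfam :=
    Matrix.linearIndependent_rows_iff_isUnit.mpr hunit
  have hspan : Submodule.span ℝ (Set.range wfam) = ⊤ :=
    hli.span_eq_top_of_card_eq_finrank (by simp)
  have hmain : (dV • L2 - dV' • L1) = (dU • LM) := by
    refine LinearMap.ext_on hspan ?_
    intro q hq
    obtain ⟨j, rfl⟩ := hq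
    simp only [LinearMap.sub_apply, LinearMap.smul_apply, smul_eq_mul]
    refine Fin.lastCases ?_ (fun j' => ?_) j
    · rw [hwfam, Fin.snoc_last, hL1e, hL2e, hLMe]
      ring
    · rw [hwfam, Fin.snoc_castSucc]
      have hLMvj : LM (v j') = 0 := by
        rw [hLM]
        refine Matrix.det_zero_of_row_eq (Fin.castSucc_lt_last j').ne ?_
        show (Fin.snoc v (v j') : Fin (n+2) → Fin (n+2) → ℝ) j'.castSucc
          = (Fin.snoc v (v j') : Fin (n+2) → Fin (n+2) → ℝ) (Fin.last (n+1))
        rw [Fin.snoc_castSucc, Fin.snoc_last]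
      rw [hLMvj, mul_zero]
      by_cases hji : j' = i
      · subst hji
        have hperm1 : (Matrix.of (Fin.snoc w1 (fun a => v j' a.castSucc) :
            Fin (n+1) → Fin (n+1) → ℝ))
            = (Matrix.of fun j a : Fin (n+1) => v j a.castSucc).submatrix (tauPerm j') id := by
          ext b a
          rw [Matrix.submatrix_apply, Matrix.of_apply, Matrix.of_apply, id_eq, tauPerm_apply]
          refine Fin.lastCases ?_ (fun k => ?_) b
          · rw [Fin.snoc_last, Fin.snoc_last]
          · rw [Fin.snoc_castSucc, Fin.snoc_castSucc, hw1]
        have hperm2 : (Matrix.of (Fin.snoc w2 (fun a => v j' (rho n a)) :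
            Fin (n+1) → Fin (n+1) → ℝ))
            = (Matrix.of fun j a : Fin (n+1) => v j (rho n a)).submatrix (tauPerm j') id := by
          ext b a
          rw [Matrix.submatrix_apply, Matrix.of_apply, Matrix.of_apply, id_eq, tauPerm_apply]
          refine Fin.lastCases ?_ (fun k => ?_) b
          · rw [Fin.snoc_last, Fin.snoc_last]
          · rw [Fin.snoc_castSucc, Fin.snoc_castSucc, hw2]
        rw [hL1, hL2, hperm1, hperm2, Matrix.det_permute, Matrix.det_permute, ← hdV, ← hdV']
        ring
      · obtain ⟨k0, hk0⟩ := Fin.exists_succAbove_eq (fun h => hji h : j' ≠ i)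
        have h1 : L1 (v j') = 0 := by
          rw [hL1]
          refine Matrix.det_zero_of_row_eq (i := Fin.castSucc k0) (j := Fin.last n)
            (Fin.castSucc_lt_last k0).ne ?_
          show (Fin.snoc w1 (fun a => v j' a.castSucc) : Fin (n+1) → Fin (n+1) → ℝ) k0.castSucc
            = (Fin.snoc w1 (fun a => v j' a.castSucc) : Fin (n+1) → Fin (n+1) → ℝ) (Fin.last n)
          rw [Fin.snoc_castSucc, Fin.snoc_last]
          funext a
          show v (i.succAbove k0) a.castSucc = v j' a.castSucc
          rw [hk0]
        have h2 : L2 (v j') = 0 := by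
          rw [hL2]
          refine Matrix.det_zero_of_row_eq (i := Fin.castSucc k0) (j := Fin.last n)
            (Fin.castSucc_lt_last k0).ne ?_
          show (Fin.snoc w2 (fun a => v j' (rho n a)) : Fin (n+1) → Fin (n+1) → ℝ) k0.castSucc
            = (Fin.snoc w2 (fun a => v j' (rho n a)) : Fin (n+1) → Fin (n+1) → ℝ) (Fin.last n)
          rw [Fin.snoc_castSucc, Fin.snoc_last]
          funext a
          show v (i.succAbove k0) (rho n a) = v j' (rho n a)
          rw [hk0]
        rw [h1, h2]
        ring
  have hp := DFunLike.congr_fun hmain p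
  simp only [LinearMap.sub_apply, LinearMap.smul_apply, smul_eq_mul] at hp
  rw [hL1, hL2, hLM] at hp
  linear_combination hp

/-- for each i, `∂^{-1} r_i W` is a non-negative differential operator
`D_i = Σ_{m=0}^{N-1} c_{i,m} ∂^m` (smooth coefficients), i.e. `(D_i φ)' = r_i·W(φ)`
for all smooth φ, and `D_i(h_j) ≡ δ_{ij}`. -/
theorem inverse_r_W_is_differential_operator (n : ℕ) (h : Fin (n + 1) → ℝ → ℝ)
    (hsm : ∀ i, ContDiff ℝ (⊤ : ℕ∞) (h i))
    (hW : ∀ x, Wr1 h x ≠ 0)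
    (r : Fin (n + 1) → ℝ → ℝ)
    (hr : ∀ i, r i = fun x => (-1 : ℝ) ^ (n - i.1) *
      (Wr1 (fun j => h (i.succAbove j)) x / Wr1 h x))
    :
    ∀ i : Fin (n + 1), ∃ c : Fin (n + 1) → ℝ → ℝ,
      (∀ m, ContDiff ℝ (⊤ : ℕ∞) (c m)) ∧
      (∀ φ : ℝ → ℝ, ContDiff ℝ (⊤ : ℕ∞) φ → ∀ x : ℝ,
        deriv (fun x' => ∑ m, c m x' * iteratedDeriv m.1 φ x') x
          = r i x * Wop h φ x) ∧
      (∀ j : Fin (n + 1), ∀ x : ℝ,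
        ∑ m, c m x * iteratedDeriv m.1 (h j) x = if i = j then (1 : ℝ) else 0) := by
  intro i
  classical
  set sgn : ℝ := (-1 : ℝ) ^ (n - i.1) with hsgn
  set c : Fin (n + 1) → ℝ → ℝ := fun m x =>
    sgn * ((-1 : ℝ) ^ (m.1 + n) *
      (Matrix.of fun a b : Fin n =>
        iteratedDeriv (Fin.succAbove m a).1 (h (i.succAbove b)) x).det) / Wr1 h x with hc
  -- the cofactor expansion
  have hA : ∀ (φ : ℝ → ℝ) (x : ℝ),
      ∑ m, c m x * iteratedDeriv m.1 φ x
        = sgn * Wr1 (Fin.snoc (fun k => h (i.succAbove k)) φ) x / Wr1 h x := by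
    intro φ x
    have hdet : Wr1 (Fin.snoc (fun k => h (i.succAbove k)) φ) x =
        ∑ m : Fin (n+1), (-1 : ℝ) ^ (m.1 + n) * iteratedDeriv m.1 φ x *
          (Matrix.of fun a b : Fin n =>
            iteratedDeriv (Fin.succAbove m a).1 (h (i.succAbove b)) x).det := by
      rw [Wr1, Matrix.det_succ_column _ (Fin.last n)]
      refine Finset.sum_congr rfl fun m _ => ?_
      have h1 : (Matrix.of fun a b : Fin (n+1) => iteratedDeriv a.1
            ((Fin.snoc (fun k => h (i.succAbove k)) φ : Fin (n+1) → ℝ → ℝ) b) x) m (Fin.last n)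
          = iteratedDeriv m.1 φ x := by
        show iteratedDeriv m.1
          ((Fin.snoc (fun k => h (i.succAbove k)) φ : Fin (n+1) → ℝ → ℝ) (Fin.last n)) x = _
        rw [Fin.snoc_last]
      have h2 : (Matrix.of fun a b : Fin (n+1) => iteratedDeriv a.1
            ((Fin.snoc (fun k => h (i.succAbove k)) φ : Fin (n+1) → ℝ → ℝ) b) x).submatrix
            m.succAbove (Fin.last n).succAbove
          = Matrix.of fun a b : Fin n =>
              iteratedDeriv (Fin.succAbove m a).1 (h (i.succAbove b)) x := by
        ext a b
        show iteratedDeriv (Fin.succAbove m a).1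
            ((Fin.snoc (fun k => h (i.succAbove k)) φ : Fin (n+1) → ℝ → ℝ)
              ((Fin.last n).succAbove b)) x = _
        rw [Fin.succAbove_last, Fin.snoc_castSucc]
        rfl
      rw [h1, h2, Fin.val_last]
    rw [hdet, Finset.mul_sum, Finset.sum_div]
    refine Finset.sum_congr rfl fun m _ => ?_
    simp only [hc]
    ring
  refine ⟨c, ?_, ?_, ?_⟩
  · -- smoothness
    intro m
    simp only [hc]
    exact ((contDiff_const.mul (contDiff_const.mul
      (contDiff_det (fun a b => fun x =>
          iteratedDeriv (Fin.succAbove m a).1 (h (i.succAbove b)) x)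
        (fun a b => contDiff_top_iteratedDeriv _ (hsm _))))).div
      (contDiff_det (fun a b : Fin (n+1) => fun x => iteratedDeriv a.1 (h b) x)
        (fun a b => contDiff_top_iteratedDeriv _ (hsm _)))
      hW)
  · -- derivative property
    intro φ hφ x
    have hfun : (fun x' => ∑ m, c m x' * iteratedDeriv m.1 φ x')
        = fun x' => sgn * Wr1 (Fin.snoc (fun k => h (i.succAbove k)) φ) x' / Wr1 h x' :=
      funext fun x' => hA φ x'
    rw [hfun]
    have hsn : ∀ b, ContDiff ℝ (⊤ : ℕ∞)
        ((Fin.snoc (fun k => h (i.succAbove k)) φ : Fin (n+1) → ℝ → ℝ) b) := by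
      intro b
      refine Fin.lastCases ?_ (fun k => ?_) b
      · rw [Fin.snoc_last]; exact hφ
      · rw [Fin.snoc_castSucc]; exact hsm _
    have hG := hasDerivAt_wr (Fin.snoc (fun k => h (i.succAbove k)) φ) hsn x
    have hH := hasDerivAt_wr h hsm x
    have hd := ((hG.const_mul sgn).div hH (hW x)).deriv
    rw [show (fun x' => sgn * Wr1 (Fin.snoc (fun k => h (i.succAbove k)) φ) x' / Wr1 h x') = (fun y => sgn * Wr1 (Fin.snoc (fun k => h (i.succAbove k)) φ) y) / Wr1 h from rfl, hd]
    -- now the core identity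
    set v : Fin (n+1) → Fin (n+2) → ℝ := fun j a => iteratedDeriv a.1 (h j) x with hv
    set p : Fin (n+2) → ℝ := fun a => iteratedDeriv a.1 φ x with hpp
    have eV : (Matrix.of fun j a : Fin (n+1) => v j a.castSucc).det = Wr1 h x := by
      have hm : (Matrix.of fun j a : Fin (n+1) => v j a.castSucc)
          = (Matrix.of fun a b : Fin (n+1) => iteratedDeriv a.1 (h b) x)ᵀ := by
        ext j a
        rfl
      rw [hm, Matrix.det_transpose]
      rfl
    have eV' : (Matrix.of fun j a : Fin (n+1) => v j (rho n a)).det = WrB h x := by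
      have hm : (Matrix.of fun j a : Fin (n+1) => v j (rho n a))
          = (Matrix.of fun a b : Fin (n+1) =>
              iteratedDeriv (if a.1 = n then n + 1 else a.1) (h b) x)ᵀ := by
        ext j a
        show iteratedDeriv (rho n a).1 (h j) x = _
        rw [Matrix.transpose_apply, Matrix.of_apply]
        congr 1
        simp [rho, apply_ite Fin.val]
      rw [hm, Matrix.det_transpose]
      rfl
    have eU : (Matrix.of fun k a : Fin n => v (i.succAbove k) a.castSucc.castSucc).det
        = Wr1 (fun j => h (i.succAbove j)) x := by
      have hm : (Matrix.of fun k a : Fin n => v (i.succAbove k) a.castSucc.castSucc)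
          = (Matrix.of fun a b : Fin n => iteratedDeriv a.1 (h (i.succAbove b)) x)ᵀ := by
        ext k a
        rfl
      rw [hm, Matrix.det_transpose]
      rfl
    have eG : (Matrix.of (Fin.snoc (fun k a => v (i.succAbove k) a.castSucc)
          (fun a => p a.castSucc) : Fin (n+1) → Fin (n+1) → ℝ)).det
        = Wr1 (Fin.snoc (fun k => h (i.succAbove k)) φ) x := by
      have hm : (Matrix.of (Fin.snoc (fun k a => v (i.succAbove k) a.castSucc)
            (fun a => p a.castSucc) : Fin (n+1) → Fin (n+1) → ℝ))
          = (Matrix.of fun a b : Fin (n+1) => iteratedDeriv a.1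
              ((Fin.snoc (fun k => h (i.succAbove k)) φ : Fin (n+1) → ℝ → ℝ) b) x)ᵀ := by
        ext b a
        rw [Matrix.transpose_apply, Matrix.of_apply, Matrix.of_apply]
        refine Fin.lastCases ?_ (fun k => ?_) b
        · rw [Fin.snoc_last, Fin.snoc_last]
          all_goals rfl
        · rw [Fin.snoc_castSucc, Fin.snoc_castSucc]
          all_goals rfl
      rw [hm, Matrix.det_transpose]
      rfl
    have eG' : (Matrix.of (Fin.snoc (fun k a => v (i.succAbove k) (rho n a))
          (fun a => p (rho n a)) : Fin (n+1) → Fin (n+1) → ℝ)).det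
        = WrB (Fin.snoc (fun k => h (i.succAbove k)) φ) x := by
      have hm : (Matrix.of (Fin.snoc (fun k a => v (i.succAbove k) (rho n a))
            (fun a => p (rho n a)) : Fin (n+1) → Fin (n+1) → ℝ))
          = (Matrix.of fun a b : Fin (n+1) => iteratedDeriv (if a.1 = n then n + 1 else a.1)
              ((Fin.snoc (fun k => h (i.succAbove k)) φ : Fin (n+1) → ℝ → ℝ) b) x)ᵀ := by
        ext b a
        rw [Matrix.transpose_apply, Matrix.of_apply, Matrix.of_apply]
        refine Fin.lastCases ?_ (fun k => ?_) b
        · rw [Fin.snoc_last, Fin.snoc_last]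
          show iteratedDeriv (rho n a).1 φ x = _
          congr 1
          simp [rho, apply_ite Fin.val]
        · rw [Fin.snoc_castSucc, Fin.snoc_castSucc]
          show iteratedDeriv (rho n a).1 (h (i.succAbove k)) x = _
          congr 1
          simp [rho, apply_ite Fin.val]
      rw [hm, Matrix.det_transpose]
      rfl
    have eM : (Matrix.of (Fin.snoc v p : Fin (n+2) → Fin (n+2) → ℝ)).det
        = Wr1 (Fin.snoc h φ) x := by
      have hm : (Matrix.of (Fin.snoc v p : Fin (n+2) → Fin (n+2) → ℝ))
          = (Matrix.of fun a b : Fin (n+2) => iteratedDeriv a.1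
              ((Fin.snoc h φ : Fin (n+2) → ℝ → ℝ) b) x)ᵀ := by
        ext b a
        rw [Matrix.transpose_apply, Matrix.of_apply, Matrix.of_apply]
        refine Fin.lastCases ?_ (fun k => ?_) b
        · rw [Fin.snoc_last, Fin.snoc_last]
          all_goals rfl
        · rw [Fin.snoc_castSucc, Fin.snoc_castSucc]
          all_goals rfl
      rw [hm, Matrix.det_transpose]
      rfl
    have hVne : (Matrix.of fun j a : Fin (n+1) => v j a.castSucc).det ≠ 0 := by
      rw [eV]; exact hW x
    have hcore := core_identity n i v p hVne
    rw [eV, eV', eU, eG, eG', eM] at hcore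
    rw [hr i]
    simp only [Wop]
    field_simp [hW x]
    linear_combination sgn * hcore
  · -- delta property
    intro j x
    rw [hA (h j) x]
    by_cases hij : i = j
    · subst hij
      rw [if_pos rfl]
      have hτ : Wr1 (Fin.snoc (fun k => h (i.succAbove k)) (h i)) x
          = ((Equiv.Perm.sign (tauPerm i) : ℤ) : ℝ) * Wr1 h x := by
        have hmat : (Matrix.of fun a b : Fin (n+1) => iteratedDeriv a.1
              ((Fin.snoc (fun k => h (i.succAbove k)) (h i) : Fin (n+1) → ℝ → ℝ) b) x)
            = (Matrix.of fun a b : Fin (n+1) =>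
                iteratedDeriv a.1 (h b) x).submatrix id (tauPerm i) := by
          ext a b
          rw [Matrix.submatrix_apply, Matrix.of_apply, Matrix.of_apply, id_eq, tauPerm_apply]
          congr 1
          refine Fin.lastCases ?_ (fun k => ?_) b
          · rw [Fin.snoc_last, Fin.snoc_last]
          · rw [Fin.snoc_castSucc, Fin.snoc_castSucc]
        rw [Wr1, hmat, Matrix.det_permute', Wr1]
      rw [hτ, tauPerm_sign]
      have hne := hW x
      have hpow : sgn * (-1 : ℝ) ^ (n + i.1) = 1 := by
        rw [hsgn, ← pow_add]
        have h2 : (n - i.1) + (n + i.1) = n + n := by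
          have := i.isLt; omega
        rw [h2]
        exact Even.neg_one_pow ⟨n, rfl⟩
      field_simp
      linear_combination hpow
    · rw [if_neg hij]
      have hzero : Wr1 (Fin.snoc (fun k => h (i.succAbove k)) (h j)) x = 0 := by
        obtain ⟨k0, hk0⟩ := Fin.exists_succAbove_eq (Ne.symm hij)
        rw [Wr1]
        refine Matrix.det_zero_of_column_eq (i := Fin.castSucc k0) (j := Fin.last n)
          (Fin.castSucc_lt_last k0).ne fun a => ?_
        rw [Matrix.of_apply, Matrix.of_apply]
        congr 1
        rw [Fin.snoc_castSucc, Fin.snoc_last, hk0]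
      rw [hzero]
      simp
end
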